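/- arXiv:0808.3599 — 3 statements merged into one kernel-verified Lean document; each statement's English description precedes it below -/
import Mathlib

section
/- Let A be a measurable set of paths such that the event {S_0 ∈ A} is increasing with respect to the Bernoulli arrow variables (ξ_z) and such that P_{1/2}(S_0 ∈ A) = 0, and set θ_A(p) = P_p(S_0 ∈ A). Let N_A be the cardinality of the set {τ ∈ [0,1] : S_0^τ ∈ A} in the dynamical discrete web. If there exists c < ∞ such that θ_A(p) ≤ c(p − 1/2) for all p ≥ 1/2, then E(N_A) < ∞. -/
open MeasureTheory ProbabilityTheory Filter Set
open scoped ENNReal NNReal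

noncomputable section

namespace DyDWPaper

/-- Linear interpolation of a discrete-time path at real times `t ≥ 0`. -/
def interp (w : ℕ → ℤ) (t : ℝ) : ℝ :=
  ((⌊t⌋₊ + 1 : ℝ) - t) * (w ⌊t⌋₊ : ℝ) + (t - (⌊t⌋₊ : ℝ)) * (w (⌊t⌋₊ + 1) : ℝ)

/-- Diffusive rescaling `π̃(t) = δ·π(t/δ²)`. -/
def rescale (δ : ℝ) (f : ℝ → ℝ) : ℝ → ℝ := fun t => δ * f (t / δ ^ 2)

/-- The event `O = {π : π(t) > −1 on [0,1] and π(1) > 1}`. -/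
def OEvent (f : ℝ → ℝ) : Prop := (∀ t ∈ Set.Icc (0 : ℝ) 1, f t > -1) ∧ f 1 > 1

/-- The `r`-neighbourhood `O + r` of `O` in sup norm on `C([0,1])`. -/
def OPlus (r : ℝ) : Set (ℝ → ℝ) :=
  {f | ∃ g : ℝ → ℝ, ContinuousOn g (Set.Icc (0 : ℝ) 1) ∧ OEvent g ∧
    ∀ t ∈ Set.Icc (0 : ℝ) 1, |f t - g t| ≤ r}

/-- A model of the dynamical discrete web: i.i.d. (over even sites of `ℤ²`) arrow
processes, each one a stationary right-continuous `{±1}`-valued Markov jump process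
in the dynamical time `τ`, switching at rate `1/2` (uniform resampling at rate 1). -/
structure Model (Ω : Type) [MeasurableSpace Ω] where
  P : Measure Ω
  prob : IsProbabilityMeasure P
  ξ : ℤ × ℤ → ℝ → Ω → ℤ
  vals : ∀ z τ ω, 0 ≤ τ → Even (z.1 + z.2) → ξ z τ ω = 1 ∨ ξ z τ ω = -1
  meas : ∀ z τ, Measurable (ξ z τ)
  rightCont : ∀ ω z τ, 0 ≤ τ → Even (z.1 + z.2) →
    ∃ ε > 0, ∀ τ', τ ≤ τ' → τ' < τ + ε → ξ z τ' ω = ξ z τ ω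
  fdd : ∀ z, Even (z.1 + z.2) → ∀ (n : ℕ) (τ : Fin (n + 1) → ℝ),
    0 ≤ τ 0 → StrictMono τ → ∀ e : Fin (n + 1) → ℤ, (∀ i, e i = 1 ∨ e i = -1) →
    (P {ω | ∀ i, ξ z (τ i) ω = e i}).toReal =
      (1 / 2) * ∏ i : Fin n,
        (if e i.succ = e i.castSucc
          then (1 + Real.exp (-(τ i.succ - τ i.castSucc))) / 2
          else (1 - Real.exp (-(τ i.succ - τ i.castSucc))) / 2)
  indep : iIndepFun
    (fun (z : {z : ℤ × ℤ // Even (z.1 + z.2)}) ω => fun τ : ℝ => ξ z.1 τ ω) P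

variable {Ω Ω' : Type} [MeasurableSpace Ω] [MeasurableSpace Ω']

/-- The discrete random walk started from `(x,s) ∈ ℤ²_even` following the arrows at
dynamical time `τ`; `walk ω τ x s n` is its position at (absolute) time `s + n`. -/
def Model.walk (M : Model Ω) (ω : Ω) (τ : ℝ) (x s : ℤ) : ℕ → ℤ
  | 0 => x
  | n + 1 => M.walk ω τ x s n + M.ξ (M.walk ω τ x s n, s + (n : ℤ)) τ ω

/-- The walk from `(x,s)` as a real-time path (linear interpolation), evaluated at
absolute time `t ≥ s`. -/
def Model.path (M : Model Ω) (ω : Ω) (τ : ℝ) (x s : ℤ) (t : ℝ) : ℝ :=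
  interp (fun n => M.walk ω τ x s n) (t - (s : ℝ))

/-- The path `S₀^τ` from the origin, interpolated to real times. -/
def Model.S0 (M : Model Ω) (τ : ℝ) (ω : Ω) : ℝ → ℝ :=
  fun t => interp (fun n => M.walk ω τ 0 0 n) t

/-- A simple symmetric random walk: i.i.d. uniform `{±1}` increments `X n`. -/
structure RW (Ω : Type) [MeasurableSpace Ω] where
  P : Measure Ω
  prob : IsProbabilityMeasure P
  X : ℕ → Ω → ℤ
  vals : ∀ n ω, X n ω = 1 ∨ X n ω = -1
  meas : ∀ n, Measurable (X n)
  indep : iIndepFun X P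
  fair : ∀ n, P {ω | X n ω = 1} = 1 / 2

def RW.S (R : RW Ω) (n : ℕ) (ω : Ω) : ℤ := ∑ i ∈ Finset.range n, R.X i ω

def RW.path (R : RW Ω) (ω : Ω) : ℝ → ℝ := interp fun n => R.S n ω

/-- The static discrete web with parameter `p`: i.i.d. arrows over even sites,
right with probability `p`. -/
structure StaticModel (Ω : Type) [MeasurableSpace Ω] (p : ℝ) where
  P : MeasureTheory.Measure Ω
  prob : MeasureTheory.IsProbabilityMeasure P
  ξ : ℤ × ℤ → Ω → ℤ
  vals : ∀ z ω, Even (z.1 + z.2) → ξ z ω = 1 ∨ ξ z ω = -1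
  meas : ∀ z, Measurable (ξ z)
  indep : ProbabilityTheory.iIndepFun
    (fun (z : {z : ℤ × ℤ // Even (z.1 + z.2)}) ω => ξ z.1 ω) P
  marginal : ∀ z, Even (z.1 + z.2) → P {ω | ξ z ω = 1} = ENNReal.ofReal p

/-- The deterministic walk from the origin reading off an arrow configuration `c`. -/
def walkOf (c : ℤ × ℤ → ℤ) : ℕ → ℤ
  | 0 => 0
  | n + 1 => walkOf c n + c (walkOf c n, (n : ℤ))

def StaticModel.walk {Ω : Type} [MeasurableSpace Ω] {p : ℝ} (SM : StaticModel Ω p)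
    (ω : Ω) : ℕ → ℤ := walkOf fun z => SM.ξ z ω

/-- A simple random walk with probability `p` for a `+1` increment. -/
structure RWp (Ω : Type) [MeasurableSpace Ω] (p : ℝ) where
  P : MeasureTheory.Measure Ω
  prob : MeasureTheory.IsProbabilityMeasure P
  X : ℕ → Ω → ℤ
  vals : ∀ n ω, X n ω = 1 ∨ X n ω = -1
  meas : ∀ n, Measurable (X n)
  indep : ProbabilityTheory.iIndepFun X P
  marginal : ∀ n, P {ω | X n ω = 1} = ENNReal.ofReal p

def RWp.S {Ω : Type} [MeasurableSpace Ω] {p : ℝ} (R : RWp Ω p) (n : ℕ) (ω : Ω) : ℤ :=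
  ∑ i ∈ Finset.range n, R.X i ω

/-- A standard one-dimensional Brownian motion started at `0`. -/
structure BM (Ω : Type) [MeasurableSpace Ω] where
  P : MeasureTheory.Measure Ω
  prob : MeasureTheory.IsProbabilityMeasure P
  B : ℝ → Ω → ℝ
  meas : ∀ t, Measurable (B t)
  start : ∀ ω, B 0 ω = 0
  cont : ∀ ω, Continuous fun t => B t ω
  incr : ∀ s t : ℝ, 0 ≤ s → s ≤ t →
    MeasureTheory.Measure.map (fun ω => B t ω - B s ω) P =
      ProbabilityTheory.gaussianReal 0 ((t - s).toNNReal)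
  indepIncr : ∀ (n : ℕ) (t : Fin (n + 1) → ℝ), 0 ≤ t 0 → StrictMono t →
    ProbabilityTheory.iIndepFun
      (fun (i : Fin n) ω => B (t i.succ) ω - B (t i.castSucc) ω) P

/-- `K(γ) = (γ−2)√((γ+1)/(γ−1))`. -/
def Kfun (γ : ℝ) : ℝ := (γ - 2) * Real.sqrt ((γ + 1) / (γ - 1))

/-- `γ(K)`, the solution in `(2,∞)` of `K(γ) = K` (as a supremum, which coincides
with the unique solution for `K > 0`). -/
def gammaOf (K : ℝ) : ℝ := sSup {g : ℝ | 2 < g ∧ Kfun g ≤ K}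

/-- `d_k = 2(⌊γ^k/2⌋+1)`. -/
def dseq (γ : ℝ) (k : ℕ) : ℤ := 2 * (⌊γ ^ k / 2⌋ + 1)

/-- `t_n = d_0² + ⋯ + d_{n−1}²`. -/
def tseq (γ : ℝ) (n : ℕ) : ℤ := ∑ k ∈ Finset.range n, dseq γ k ^ 2

/-- `x_n = d_0 + ⋯ + d_{n−1}`. -/
def xseq (γ : ℝ) (n : ℕ) : ℤ := ∑ k ∈ Finset.range n, dseq γ k

/-- The right-continuous step function `∂^γ`, equal to `x_n − d_n` on `[t_n, t_{n+1})`. -/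
def boundary (γ : ℝ) (t : ℝ) : ℝ :=
  ((xseq γ (sSup {n : ℕ | ((tseq γ n : ℝ)) ≤ t}) : ℝ)) -
    ((dseq γ (sSup {n : ℕ | ((tseq γ n : ℝ)) ≤ t}) : ℝ))

variable {Ω : Type} [MeasurableSpace Ω]

/-- The event `A_k^τ`: the walk of the dynamical web at dynamical time `τ` started from
`z̄_k = (x_k, t_k)` stays strictly to the right of `x_k − d_k` on `[t_k, t_{k+1}]` and is
strictly to the right of `x_{k+1}` at time `t_{k+1}`. -/
def Aevent (M : Model Ω) (γ : ℝ) (k : ℕ) (τ : ℝ) : Set Ω :=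
  {ω | (∀ t ∈ Set.Icc ((tseq γ k : ℝ)) ((tseq γ (k + 1) : ℝ)),
      M.path ω τ (xseq γ k) (tseq γ k) t > ((xseq γ k : ℝ) - (dseq γ k : ℝ))) ∧
    M.path ω τ (xseq γ k) (tseq γ k) ((tseq γ (k + 1) : ℝ)) > (xseq γ (k + 1) : ℝ)}

/-- `γ₀ = sup_{k,K} 1/P(A_k(K))`. -/
def gam0 (M : Model Ω) : ℝ :=
  ⨆ k : ℕ, ⨆ K : {K : ℝ // 0 < K}, ((M.P (Aevent M (gammaOf K.1) k 0)).toReal)⁻¹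

/-- `f(p,K)` from the first-passage asymptotics of Brownian motion below a square-root
boundary; the sum is over `n ≥ 1`. -/
def fseq (p K : ℝ) : ℝ :=
  Real.sin (Real.pi * p / 2) * Real.Gamma (1 + p / 2) / Real.pi *
    ∑' n : ℕ, (Real.sqrt 2 * K) ^ (n + 1) / ((n + 1).factorial : ℝ) *
      Real.Gamma ((((n : ℝ) + 1) - p) / 2)

/-- `p(K)`, the solution in `(0,1)` of `f(p,K) = 1` (as an infimum, which coincides
with the unique solution). -/
def pOf (K : ℝ) : ℝ := sInf {p : ℝ | p ∈ Set.Ioo (0 : ℝ) 1 ∧ fseq p K = 1}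

/-- A path is `K⁺`-subdiffusive iff `π(t) ≥ −j − K√t` for all `t > 0`, for some `j ≥ 0`. -/
def KSubdiffusive (K : ℝ) (π : ℝ → ℝ) : Prop :=
  ∃ j : ℝ, 0 ≤ j ∧ ∀ t : ℝ, 0 < t → π t ≥ -j - K * Real.sqrt t

/-- A path is subdiffusive iff for some finite `K > 0`, `liminf π(t)/√t ≥ −K` or
`limsup π(t)/√t ≤ K`. -/
def Subdiffusive (π : ℝ → ℝ) : Prop :=
  ∃ K : ℝ, 0 < K ∧
    ((-(K : EReal) ≤ Filter.liminf (fun t : ℝ => ((π t / Real.sqrt t : ℝ) : EReal)) Filter.atTop) ∨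
      Filter.limsup (fun t : ℝ => ((π t / Real.sqrt t : ℝ) : EReal)) Filter.atTop ≤ (K : EReal))

/-- The law of the iterated logarithm for a path. -/
def SatisfiesLIL (π : ℝ → ℝ) : Prop :=
  Filter.limsup
      (fun t : ℝ => ((π t / Real.sqrt (2 * t * Real.log (Real.log t)) : ℝ) : EReal))
      Filter.atTop = 1 ∧
  Filter.liminf
      (fun t : ℝ => ((π t / Real.sqrt (2 * t * Real.log (Real.log t)) : ℝ) : EReal))
      Filter.atTop = -1

/-- Modulus of continuity on `[0,1]`. -/
def modulus (f : ℝ → ℝ) (ε : ℝ) : ℝ :=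
  sSup {d : ℝ | ∃ s ∈ Set.Icc (0 : ℝ) 1, ∃ t ∈ Set.Icc (0 : ℝ) 1, |s - t| < ε ∧ d = |f t - f s|}

/-- `l(t) = #{i ≤ t : S_d(i) = S_d'(i)}`. -/
def coalCount (Sd Sd' : ℕ → Ω → ℤ) (ω : Ω) (t : ℕ) : ℕ :=
  ((Finset.range (t + 1)).filter fun i => Sd i ω = Sd' i ω).card

/-- `F(t) = t + Σ_{k ≤ l(t)} ΔT_k`. -/
def clockSum (Sd Sd' : ℕ → Ω → ℤ) (ΔT : ℕ → Ω → ℕ) (ω : Ω) (t : ℕ) : ℕ :=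
  t + ∑ k ∈ Finset.range (coalCount Sd Sd' ω t + 1), ΔT k ω

/-- The right-continuous inverse `C(u) = inf{t : F(t) > u}` (discrete time). -/
def rcInv (Sd Sd' : ℕ → Ω → ℤ) (ΔT : ℕ → Ω → ℕ) (ω : Ω) (u : ℕ) : ℕ :=
  sInf {t : ℕ | u < clockSum Sd Sd' ΔT ω t}

/-- The right-continuous inverse `C(u) = inf{t : F(t) > u}` at a real argument. -/
def rcInvR (Sd Sd' : ℕ → Ω → ℤ) (ΔT : ℕ → Ω → ℕ) (ω : Ω) (u : ℝ) : ℕ :=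
  sInf {t : ℕ | u < (clockSum Sd Sd' ΔT ω t : ℝ)}

/-- The `α`-energy of a measure on `[0,1]`. -/
def energy (α : ℝ) (σ : MeasureTheory.Measure ℝ) : ℝ≥0∞ :=
  ∫⁻ τ in Set.Icc (0 : ℝ) 1, ∫⁻ τ' in Set.Icc (0 : ℝ) 1,
    (ENNReal.ofReal |τ - τ'|) ^ (-α) ∂σ ∂σ

/-!
Cut `[0, 1]` into the intervals `[i/n, (i+1)/n]` and replace every arrow `ξ_z` by its maximum
over the rational dynamical times of one interval. These maxima are again independent over the
sites, so they form a static web, with parameter `p ≤ 1/2 + 1/(4n)`: a process flipping at rate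
`1/2` stays at `-1` throughout an interval of length `h` with probability at least `e^{-h/2}/2`.
By right-continuity of the arrow processes and monotonicity of `A`, an exceptional time in the
interval forces the walk of the maximal web into `A`, an event of probability
`θ(p) ≤ c (p - 1/2) ≤ c/(4n)`. So the expected number of intervals containing an exceptional time
is at most `c/4` for every `n`, and Fatou's lemma as `n → ∞` bounds `E N_A` by `c/4` as well.
-/

attribute [instance] Model.prob

lemma encard_le_of_forall_finset_card_le {α : Type*} {E : Set α} {L : ℝ≥0∞}
    (h : ∀ F : Finset α, ↑F ⊆ E → (F.card : ℝ≥0∞) ≤ L) : (E.encard : ℝ≥0∞) ≤ L := by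
  rcases E.finite_or_infinite with hfin | hinf
  · rw [hfin.encard_eq_coe_toFinset_card, ENat.toENNReal_coe]
    exact h _ hfin.coe_toFinset.subset
  · rw [hinf.encard_eq, ENat.toENNReal_top, ← ENNReal.iSup_natCast]
    refine iSup_le fun m => ?_
    obtain ⟨F, hFE, rfl⟩ := hinf.exists_subset_card_eq m
    exact h F hFE

open Classical in
def meshCount (E : Set ℝ) (n : ℕ) : ℕ :=
  ((Finset.range n).filter fun i : ℕ => (E ∩ Icc ((i : ℝ) / n) ((i + 1) / n)).Nonempty).card

lemma meshCount_le_sum {E : Set ℝ} {n : ℕ} (f : ℕ → ℝ≥0∞)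
    (h : ∀ i < n, (E ∩ Icc ((i : ℝ) / n) ((i + 1) / n)).Nonempty → 1 ≤ f i) :
    (meshCount E n : ℝ≥0∞) ≤ ∑ i ∈ Finset.range n, f i := by
  classical
  rw [meshCount, Finset.card_filter, Nat.cast_sum]
  apply Finset.sum_le_sum
  intro i hi
  split_ifs with hE
  · exact_mod_cast h i (Finset.mem_range.1 hi) hE
  · simp

-- The `min` puts `τ = 1` into the last interval `[(n-1)/n, 1]`.
def meshIndex (n : ℕ) (τ : ℝ) : ℕ := min ⌊τ * n⌋₊ (n - 1)

lemma meshIndex_lt {n : ℕ} (hn : 0 < n) (τ : ℝ) : meshIndex n τ < n :=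
  (min_le_right _ _).trans_lt (Nat.sub_lt hn one_pos)

lemma mem_Icc_meshIndex {n : ℕ} (hn : 0 < n) {τ : ℝ} (hτ : τ ∈ Icc (0 : ℝ) 1) :
    τ ∈ Icc ((meshIndex n τ : ℝ) / n) ((meshIndex n τ + 1) / n) := by
  have hn' : (0 : ℝ) < n := Nat.cast_pos.2 hn
  rw [mem_Icc, div_le_iff₀ hn', le_div_iff₀ hn']
  constructor
  · calc (meshIndex n τ : ℝ) ≤ ⌊τ * n⌋₊ := Nat.cast_le.2 (min_le_left _ _)
      _ ≤ τ * n := Nat.floor_le (mul_nonneg hτ.1 hn'.le)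
  · rcases le_total ⌊τ * n⌋₊ (n - 1) with h | h
    · rw [meshIndex, min_eq_left h]
      exact (Nat.lt_floor_add_one _).le
    · rw [meshIndex, min_eq_right h, Nat.cast_sub hn, Nat.cast_one, sub_add_cancel]
      nlinarith [hτ.2]

lemma eventually_meshIndex_ne {x y : ℝ} (hx : x ∈ Icc (0 : ℝ) 1) (hy : y ∈ Icc (0 : ℝ) 1)
    (hxy : x ≠ y) : ∀ᶠ n in atTop, meshIndex n x ≠ meshIndex n y := by
  have hsmall : ∀ᶠ n : ℕ in atTop, 1 / (n : ℝ) < dist x y :=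
    tendsto_one_div_atTop_nhds_zero_nat.eventually (gt_mem_nhds (dist_pos.2 hxy))
  filter_upwards [hsmall, eventually_gt_atTop 0] with n hsmall hn heq
  have hx' := mem_Icc_meshIndex hn hx
  rw [heq] at hx'
  have := Real.dist_le_of_mem_Icc hx' (mem_Icc_meshIndex hn hy)
  rw [← sub_div, add_sub_cancel_left] at this
  linarith

lemma encard_le_liminf_meshCount {E : Set ℝ} (hE : E ⊆ Icc 0 1) :
    (E.encard : ℝ≥0∞) ≤ liminf (fun n => (meshCount E n : ℝ≥0∞)) atTop := by
  refine encard_le_of_forall_finset_card_le fun F hF => ?_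
  have hsep : ∀ᶠ n in atTop, ∀ x ∈ F, ∀ y ∈ F, x ≠ y → meshIndex n x ≠ meshIndex n y := by
    refine (eventually_all_finset F).2 fun x hx => (eventually_all_finset F).2 fun y hy => ?_
    exact eventually_imp_distrib_left.2 (eventually_meshIndex_ne (hE (hF hx)) (hE (hF hy)))
  refine le_liminf_of_le (by isBoundedDefault) ?_
  filter_upwards [hsep, eventually_gt_atTop 0] with n hsep hn
  classical
  have hmaps : Set.MapsTo (meshIndex n) F
      ((Finset.range n).filter fun i : ℕ => (E ∩ Icc ((i : ℝ) / n) ((i + 1) / n)).Nonempty) :=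
    fun x hx =>
    Finset.mem_filter.2 ⟨Finset.mem_range.2 (meshIndex_lt hn x),
      x, hF hx, mem_Icc_meshIndex hn (hE (hF hx))⟩
  exact Nat.cast_le.2 (Finset.card_le_card_of_injOn (meshIndex n) hmaps
    fun x hx y hy => not_imp_not.1 (hsep x hx y hy))

lemma even_walkOf_add {c : ℤ × ℤ → ℤ} (hc : ∀ z, Even (z.1 + z.2) → c z = 1 ∨ c z = -1)
    (k : ℕ) : Even (walkOf c k + k) := by
  induction k with
  | zero => simp [walkOf]
  | succ k ih =>
    rw [walkOf, Nat.cast_succ]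
    rcases hc (walkOf c k, k) ih with h | h <;> rw [h]
    · rw [show walkOf c k + 1 + ((k : ℤ) + 1) = walkOf c k + k + 2 by ring]
      exact ih.add even_two
    · rwa [show walkOf c k + -1 + ((k : ℤ) + 1) = walkOf c k + k by ring]

lemma walkOf_congr_even {c c' : ℤ × ℤ → ℤ} (hc : ∀ z, Even (z.1 + z.2) → c z = 1 ∨ c z = -1)
    (h : ∀ z, Even (z.1 + z.2) → c z = c' z) : walkOf c = walkOf c' := by
  funext k
  induction k with
  | zero => rfl
  | succ k ih => rw [walkOf, walkOf, ← ih, h _ (even_walkOf_add hc k)]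

lemma measurable_walkOf {ξ : ℤ × ℤ → Ω → ℤ} (h : ∀ z, Measurable (ξ z)) (k : ℕ) :
    Measurable fun ω => walkOf (fun z => ξ z ω) k := by
  induction k with
  | zero => exact measurable_const
  | succ k ih =>
    have hsite : Measurable fun p : Ω × ℤ => ξ (p.2, (k : ℤ)) p.1 :=
      measurable_from_prod_countable_left fun x => h (x, (k : ℤ))
    exact ih.add (hsite.comp (measurable_id.prodMk ih))

lemma Model.walk_zero_zero (M : Model Ω) (ω : Ω) (τ : ℝ) :
    M.walk ω τ 0 0 = walkOf fun z => M.ξ z τ ω := by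
  funext k
  induction k with
  | zero => rfl
  | succ k ih => rw [Model.walk, walkOf, ih, zero_add]

lemma Fin.sum_succ_sub_castSucc {m : ℕ} (f : Fin (m + 1) → ℝ) :
    ∑ j : Fin m, (f j.succ - f j.castSucc) = f (Fin.last m) - f 0 := by
  induction m with
  | zero => simp
  | succ m ih =>
    rw [Fin.sum_univ_castSucc]
    simp only [Fin.succ_castSucc]
    rw [ih (fun j => f j.castSucc)]
    simp

lemma Real.exp_half_le_one_add_exp_div_two (x : ℝ) : Real.exp (x / 2) ≤ (1 + Real.exp x) / 2 := by
  have hsq : Real.exp (x / 2) ^ 2 = Real.exp x := by rw [← Real.exp_nat_mul]; ring_nf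
  nlinarith [sq_nonneg (1 - Real.exp (x / 2))]

def Model.allNeg (M : Model Ω) (z : ℤ × ℤ) (D : Set ℝ) : Set Ω :=
  {ω | ∀ τ ∈ D, M.ξ z τ ω = -1}

lemma Model.measurableSet_allNeg (M : Model Ω) (z : ℤ × ℤ) {D : Set ℝ} (hD : D.Countable) :
    MeasurableSet (M.allNeg z D) := by
  have : M.allNeg z D = ⋂ τ ∈ D, M.ξ z τ ⁻¹' {-1} := by ext; simp [Model.allNeg]
  rw [this]
  exact .biInter hD fun τ _ => M.meas z τ (measurableSet_singleton _)

lemma Model.toReal_measure_allNeg_finset (M : Model Ω) {z : ℤ × ℤ} (hz : Even (z.1 + z.2))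
    {s : Finset ℝ} {m : ℕ} (hs : s.card = m + 1) (hs0 : ∀ x ∈ s, 0 ≤ x) :
    (M.P (M.allNeg z s)).toReal = 1 / 2 * ∏ j : Fin m,
      (1 + Real.exp (-(s.orderEmbOfFin hs j.succ - s.orderEmbOfFin hs j.castSucc))) / 2 := by
  have hset : {ω | ∀ j, M.ξ z (s.orderEmbOfFin hs j) ω = -1} = M.allNeg z s := by
    rw [Model.allNeg, ← s.range_orderEmbOfFin hs]
    simp only [forall_mem_range]
  have := M.fdd z hz m (s.orderEmbOfFin hs) (hs0 _ (s.orderEmbOfFin_mem hs 0))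
    (s.orderEmbOfFin hs).strictMono (fun _ => -1) fun _ => Or.inr rfl
  simpa only [hset, if_true] using this

lemma Model.measure_allNeg_finset_eq (M : Model Ω) {z z' : ℤ × ℤ} (hz : Even (z.1 + z.2))
    (hz' : Even (z'.1 + z'.2)) {s : Finset ℝ} (hs0 : ∀ x ∈ s, 0 ≤ x) :
    M.P (M.allNeg z s) = M.P (M.allNeg z' s) := by
  rcases s.eq_empty_or_nonempty with rfl | hne
  · simp [Model.allNeg]
  · obtain ⟨m, hm⟩ := Nat.exists_eq_add_one.2 hne.card_pos
    refine (ENNReal.toReal_eq_toReal_iff' (measure_ne_top _ _) (measure_ne_top _ _)).1 ?_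
    rw [M.toReal_measure_allNeg_finset hz hm hs0, M.toReal_measure_allNeg_finset hz' hm hs0]

lemma Model.exp_le_toReal_measure_allNeg_finset (M : Model Ω) {z : ℤ × ℤ}
    (hz : Even (z.1 + z.2)) {s : Finset ℝ} {a b : ℝ} (ha : 0 ≤ a) (hab : a ≤ b)
    (hs : ∀ x ∈ s, x ∈ Icc a b) :
    Real.exp (-(b - a) / 2) / 2 ≤ (M.P (M.allNeg z s)).toReal := by
  rcases s.eq_empty_or_nonempty with rfl | hne
  · have : Real.exp ((a - b) / 2) ≤ 1 := Real.exp_le_one_iff.2 (by linarith)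
    simp [Model.allNeg]
    linarith
  obtain ⟨m, hm⟩ := Nat.exists_eq_add_one.2 hne.card_pos
  rw [M.toReal_measure_allNeg_finset hz hm fun x hx => ha.trans (hs x hx).1]
  set τ := s.orderEmbOfFin hm
  have hτ : ∀ j, τ j ∈ Icc a b := fun j => hs _ (s.orderEmbOfFin_mem hm j)
  calc Real.exp (-(b - a) / 2) / 2
      ≤ 1 / 2 * Real.exp (-(τ (Fin.last m) - τ 0) / 2) := by
        have : τ (Fin.last m) - τ 0 ≤ b - a := sub_le_sub (hτ _).2 (hτ _).1
        rw [one_div_mul_eq_div]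
        gcongr
    _ = 1 / 2 * ∏ j : Fin m, Real.exp (-(τ j.succ - τ j.castSucc) / 2) := by
        rw [← Real.exp_sum, ← Fin.sum_succ_sub_castSucc τ, ← Finset.sum_div,
          Finset.sum_neg_distrib]
    _ ≤ _ := by
        gcongr with j
        exact Real.exp_half_le_one_add_exp_div_two _

lemma Model.measure_allNeg_eq_iInf (M : Model Ω) (z : ℤ × ℤ) {D : Set ℝ} (hD : D.Countable) :
    M.P (M.allNeg z D) =
      ⨅ s : Finset D, M.P (M.allNeg z (s.map (Function.Embedding.subtype (· ∈ D)))) := by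
  have := hD.to_subtype
  have hinter : M.allNeg z D =
      ⋂ s : Finset D, M.allNeg z (s.map (Function.Embedding.subtype (· ∈ D))) := by
    ext ω
    simp only [Model.allNeg, mem_iInter, Finset.coe_map, mem_image, Finset.mem_coe,
      Function.Embedding.coe_subtype, forall_exists_index, and_imp, forall_apply_eq_imp_iff₂]
    exact ⟨fun h s x _ => h x x.2, fun h τ hτ => h {⟨τ, hτ⟩} ⟨τ, hτ⟩ (Finset.mem_singleton_self _)⟩
  rw [hinter]
  refine Directed.measure_iInter
    (fun s => (M.measurableSet_allNeg z (Finset.countable_toSet _)).nullMeasurableSet)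
    ?_ ⟨∅, measure_ne_top _ _⟩
  exact Antitone.directed_ge fun s t hst ω hω τ hτ =>
    hω τ (Finset.map_subset_map.2 hst hτ)

lemma Model.measure_allNeg_eq (M : Model Ω) {z z' : ℤ × ℤ} (hz : Even (z.1 + z.2))
    (hz' : Even (z'.1 + z'.2)) {D : Set ℝ} (hD : D.Countable) (hD0 : D ⊆ Ici 0) :
    M.P (M.allNeg z D) = M.P (M.allNeg z' D) := by
  simp only [M.measure_allNeg_eq_iInf _ hD]
  refine iInf_congr fun s => M.measure_allNeg_finset_eq hz hz' fun x hx => ?_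
  obtain ⟨y, -, rfl⟩ := Finset.mem_map.1 hx
  exact hD0 y.2

lemma Model.ofReal_exp_le_measure_allNeg (M : Model Ω) {z : ℤ × ℤ} (hz : Even (z.1 + z.2))
    {D : Set ℝ} (hD : D.Countable) {a b : ℝ} (ha : 0 ≤ a) (hab : a ≤ b) (hDab : D ⊆ Icc a b) :
    ENNReal.ofReal (Real.exp (-(b - a) / 2) / 2) ≤ M.P (M.allNeg z D) := by
  rw [M.measure_allNeg_eq_iInf z hD]
  refine le_iInf fun s => ENNReal.ofReal_le_of_le_toReal
    (M.exp_le_toReal_measure_allNeg_finset hz ha hab fun x hx => ?_)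
  obtain ⟨y, -, rfl⟩ := Finset.mem_map.1 hx
  exact hDab y.2

lemma Model.measure_allNeg_le_half (M : Model Ω) {z : ℤ × ℤ} (hz : Even (z.1 + z.2))
    {D : Set ℝ} {a : ℝ} (ha : a ∈ D) (ha0 : 0 ≤ a) :
    M.P (M.allNeg z D) ≤ ENNReal.ofReal (1 / 2) := by
  have hsingle := M.toReal_measure_allNeg_finset hz (s := {a}) (m := 0) rfl (by simpa)
  calc M.P (M.allNeg z D) ≤ M.P (M.allNeg z ({a} : Finset ℝ)) :=
        measure_mono fun ω hω τ hτ => hω τ (by simp_all)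
    _ = ENNReal.ofReal (1 / 2) := by
        rw [← ENNReal.ofReal_toReal (measure_ne_top _ _), hsingle]
        simp

-- For `±1`-valued `f` this is the maximum of `f` over `D`.
open Classical in
def maxArrow (D : Set ℝ) (z : ℤ × ℤ) (f : ℝ → ℤ) : ℤ :=
  if Even (z.1 + z.2) ∧ ∀ τ ∈ D, f τ = -1 then -1 else 1

lemma maxArrow_eq_one_or (D : Set ℝ) (z : ℤ × ℤ) (f : ℝ → ℤ) :
    maxArrow D z f = 1 ∨ maxArrow D z f = -1 := by
  unfold maxArrow
  split_ifs <;> simp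

lemma measurable_maxArrow {D : Set ℝ} (hD : D.Countable) (z : ℤ × ℤ) :
    Measurable (maxArrow D z) := by
  classical
  have hall : {f : ℝ → ℤ | ∀ τ ∈ D, f τ = -1} = ⋂ τ ∈ D, (fun f => f τ) ⁻¹' {-1} := by
    ext; simp
  refine Measurable.ite ((MeasurableSet.const _).inter ?_) measurable_const measurable_const
  show MeasurableSet {f : ℝ → ℤ | ∀ τ ∈ D, f τ = -1}
  rw [hall]
  exact .biInter hD fun τ _ => measurable_pi_apply τ (measurableSet_singleton _)

def Model.maxWalk (M : Model Ω) (D : Set ℝ) (ω : Ω) : ℕ → ℤ :=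
  walkOf fun z => maxArrow D z fun τ => M.ξ z τ ω

lemma Model.measurable_maxArrow_ξ (M : Model Ω) {D : Set ℝ} (hD : D.Countable) (z : ℤ × ℤ) :
    Measurable fun ω => maxArrow D z fun τ => M.ξ z τ ω :=
  (measurable_maxArrow hD z).comp (measurable_pi_lambda _ fun τ => M.meas z τ)

lemma Model.measurableSet_maxWalk_mem (M : Model Ω) {A : Set (ℕ → ℤ)} (hA : MeasurableSet A)
    {D : Set ℝ} (hD : D.Countable) : MeasurableSet {ω | M.maxWalk D ω ∈ A} :=
  measurable_pi_lambda _ (measurable_walkOf (M.measurable_maxArrow_ξ hD)) hA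

lemma Model.setOf_maxArrow_eq_one (M : Model Ω) (D : Set ℝ) {z : ℤ × ℤ}
    (hz : Even (z.1 + z.2)) : {ω | maxArrow D z (fun τ => M.ξ z τ ω) = 1} = (M.allNeg z D)ᶜ := by
  ext ω
  simp [maxArrow, Model.allNeg, hz]

def Model.maxParam (M : Model Ω) (D : Set ℝ) : ℝ := (M.P (M.allNeg (0, 0) D)ᶜ).toReal

def Model.maxStatic (M : Model Ω) {D : Set ℝ} (hD : D.Countable) (hD0 : D ⊆ Ici 0) :
    StaticModel Ω (M.maxParam D) where
  P := M.P
  prob := M.prob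
  ξ z ω := maxArrow D z fun τ => M.ξ z τ ω
  vals z ω _ := maxArrow_eq_one_or _ _ _
  meas := M.measurable_maxArrow_ξ hD
  indep := M.indep.comp (fun z => maxArrow D z.1) fun z => measurable_maxArrow hD z.1
  marginal z hz := by
    have h00 : Even (((0, 0) : ℤ × ℤ).1 + ((0, 0) : ℤ × ℤ).2) := by simp
    rw [M.setOf_maxArrow_eq_one D hz, Model.maxParam, ENNReal.ofReal_toReal (measure_ne_top _ _),
      prob_compl_eq_one_sub (M.measurableSet_allNeg z hD),
      prob_compl_eq_one_sub (M.measurableSet_allNeg _ hD), M.measure_allNeg_eq hz h00 hD hD0]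

lemma Model.maxParam_eq (M : Model Ω) {D : Set ℝ} (hD : D.Countable) :
    M.maxParam D = 1 - (M.P (M.allNeg (0, 0) D)).toReal := by
  rw [Model.maxParam, prob_compl_eq_one_sub (M.measurableSet_allNeg _ hD),
    ENNReal.toReal_sub_of_le prob_le_one ENNReal.one_ne_top, ENNReal.toReal_one]

lemma Model.maxParam_le_one (M : Model Ω) (D : Set ℝ) : M.maxParam D ≤ 1 := by
  simpa [Model.maxParam] using ENNReal.toReal_mono ENNReal.one_ne_top (prob_le_one (μ := M.P))

lemma Model.half_le_maxParam (M : Model Ω) {D : Set ℝ} (hD : D.Countable) {a : ℝ} (ha : a ∈ D)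
    (ha0 : 0 ≤ a) : 1 / 2 ≤ M.maxParam D := by
  have := ENNReal.toReal_le_of_le_ofReal (by norm_num)
    (M.measure_allNeg_le_half (z := (0, 0)) (by simp) ha ha0)
  rw [M.maxParam_eq hD]
  linarith

lemma Model.maxParam_le (M : Model Ω) {D : Set ℝ} (hD : D.Countable) {a b : ℝ} (ha : 0 ≤ a)
    (hab : a ≤ b) (hDab : D ⊆ Icc a b) : M.maxParam D ≤ 1 / 2 + (b - a) / 4 := by
  have hlow := (ENNReal.ofReal_le_iff_le_toReal (measure_ne_top _ _)).1
    (M.ofReal_exp_le_measure_allNeg (z := (0, 0)) (by simp) hD ha hab hDab)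
  have hexp := Real.add_one_le_exp (-(b - a) / 2)
  rw [M.maxParam_eq hD]
  linarith

def ratIcc (a b : ℚ) : Set ℝ := ((↑) : ℚ → ℝ) '' Icc a b

lemma ratIcc_countable (a b : ℚ) : (ratIcc a b).Countable := (Set.to_countable _).image _

lemma ratIcc_subset_Icc (a b : ℚ) : ratIcc a b ⊆ Icc (a : ℝ) b := by
  rintro _ ⟨q, hq, rfl⟩
  exact ⟨Rat.cast_le.2 hq.1, Rat.cast_le.2 hq.2⟩

lemma exists_mem_ratIcc_Ico {a b : ℚ} {τ : ℝ} (hτ : τ ∈ Icc (a : ℝ) b) {ε : ℝ} (hε : 0 < ε) :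
    ∃ q ∈ ratIcc a b, q ∈ Ico τ (τ + ε) := by
  rcases hτ.2.eq_or_lt with rfl | hτb
  · exact ⟨b, ⟨b, right_mem_Icc.2 (Rat.cast_le.1 hτ.1), rfl⟩, le_rfl, by linarith⟩
  · obtain ⟨q, hq, hq'⟩ := exists_rat_btwn (lt_min hτb (lt_add_of_pos_right τ hε))
    exact ⟨q, ⟨q, ⟨Rat.cast_le.1 (hτ.1.trans hq.le),
      Rat.cast_le.1 (hq'.trans_le (min_le_left _ _)).le⟩, rfl⟩,
      hq.le, hq'.trans_le (min_le_right _ _)⟩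

/-- Right-continuity is what puts a rational time of the interval into every `[τ, τ + ε)`. -/
lemma Model.ξ_le_maxArrow (M : Model Ω) (ω : Ω) {z : ℤ × ℤ} (hz : Even (z.1 + z.2))
    {a b : ℚ} {τ : ℝ} (hτ0 : 0 ≤ τ) (hτ : τ ∈ Icc (a : ℝ) b) :
    M.ξ z τ ω ≤ maxArrow (ratIcc a b) z fun t => M.ξ z t ω := by
  rcases M.vals z τ ω hτ0 hz with h | h
  · obtain ⟨ε, hε, hconst⟩ := M.rightCont ω z τ hτ0 hz
    obtain ⟨q, hqD, hq⟩ := exists_mem_ratIcc_Ico hτ hε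
    have hnot : ¬ ∀ t ∈ ratIcc a b, M.ξ z t ω = -1 := fun hall => by
      have := hall q hqD
      rw [hconst q hq.1 hq.2, h] at this
      norm_num at this
    simp [maxArrow, hnot, h]
  · rw [h]
    rcases maxArrow_eq_one_or (ratIcc a b) z fun t => M.ξ z t ω with h' | h' <;> simp [h']

lemma Model.maxWalk_mem_of_walk_mem (M : Model Ω) {A : Set (ℕ → ℤ)}
    (hInc : ∀ c c' : ℤ × ℤ → ℤ, (∀ z, c z = 1 ∨ c z = -1) → (∀ z, c' z = 1 ∨ c' z = -1) →
      (∀ z, c z ≤ c' z) → walkOf c ∈ A → walkOf c' ∈ A)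
    (ω : Ω) {a b : ℚ} {τ : ℝ} (hτ0 : 0 ≤ τ) (hτ : τ ∈ Icc (a : ℝ) b)
    (hτA : M.walk ω τ 0 0 ∈ A) : M.maxWalk (ratIcc a b) ω ∈ A := by
  set c : ℤ × ℤ → ℤ := fun z => if Even (z.1 + z.2) then M.ξ z τ ω else 1
  have hc : ∀ z, c z = 1 ∨ c z = -1 := fun z => by
    by_cases hz : Even (z.1 + z.2)
    · simpa [c, hz] using M.vals z τ ω hτ0 hz
    · simp [c, hz]
  have hwalk : walkOf c = M.walk ω τ 0 0 := by
    rw [M.walk_zero_zero]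
    exact walkOf_congr_even (fun z _ => hc z) fun z hz => if_pos hz
  refine hInc c _ hc (fun z => maxArrow_eq_one_or _ _ _) (fun z => ?_) (hwalk ▸ hτA)
  by_cases hz : Even (z.1 + z.2)
  · simpa only [c, if_pos hz] using M.ξ_le_maxArrow ω hz hτ0 hτ
  · simp [c, maxArrow, hz]

lemma Model.measure_maxWalk_mem_le (M : Model Ω) {A : Set (ℕ → ℤ)} {θ : ℝ → ℝ}
    (hθ : ∀ p : ℝ, p ∈ Set.Icc (0 : ℝ) 1 → ∀ (Ω' : Type) [MeasurableSpace Ω'],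
      ∀ SM : StaticModel Ω' p, (SM.P {ω' | SM.walk ω' ∈ A}).toReal = θ p)
    {c : ℝ} (hc : ∀ p : ℝ, 1 / 2 ≤ p → p ≤ 1 → θ p ≤ c * (p - 1 / 2))
    {a b : ℚ} (ha : 0 ≤ a) (hab : a ≤ b) :
    M.P {ω | M.maxWalk (ratIcc a b) ω ∈ A} ≤ ENNReal.ofReal (max c 0 * (((b : ℝ) - a) / 4)) := by
  have ha' : (0 : ℝ) ≤ a := Rat.cast_nonneg.2 ha
  have hD0 : ratIcc a b ⊆ Ici 0 := fun x hx => ha'.trans (ratIcc_subset_Icc a b hx).1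
  set p := M.maxParam (ratIcc a b)
  have hp_half : 1 / 2 ≤ p :=
    M.half_le_maxParam (ratIcc_countable a b) ⟨a, left_mem_Icc.2 hab, rfl⟩ ha'
  have hp_le : p ≤ 1 / 2 + ((b : ℝ) - a) / 4 :=
    M.maxParam_le (ratIcc_countable a b) ha' (Rat.cast_le.2 hab) (ratIcc_subset_Icc a b)
  have hp_one : p ≤ 1 := M.maxParam_le_one _
  have hθp := hθ p ⟨by linarith, hp_one⟩ Ω (M.maxStatic (ratIcc_countable a b) hD0)
  have hθ_le : θ p ≤ max c 0 * (((b : ℝ) - a) / 4) := calc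
    θ p ≤ c * (p - 1 / 2) := hc p hp_half hp_one
    _ ≤ max c 0 * (p - 1 / 2) := mul_le_mul_of_nonneg_right (le_max_left _ _) (by linarith)
    _ ≤ max c 0 * ((b - a) / 4) := mul_le_mul_of_nonneg_left (by linarith) (le_max_right _ _)
  rw [← hθp] at hθ_le
  exact (ENNReal.le_ofReal_iff_toReal_le (measure_ne_top _ _)
    (le_trans ENNReal.toReal_nonneg hθ_le)).2 hθ_le

lemma lintegral_sum_indicator_le {α ι : Type*} [MeasurableSpace α] {μ : Measure α}
    {s : Finset ι} {G : ι → Set α} (hG : ∀ i ∈ s, MeasurableSet (G i)) {ε : ℝ≥0∞}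
    (h : ∀ i ∈ s, μ (G i) ≤ ε) : ∫⁻ x, ∑ i ∈ s, (G i).indicator 1 x ∂μ ≤ s.card * ε := by
  rw [lintegral_finsetSum' s (f := fun i => (G i).indicator 1)
    fun i hi => (measurable_const.indicator (hG i hi)).aemeasurable]
  calc ∑ i ∈ s, ∫⁻ x, (G i).indicator 1 x ∂μ = ∑ i ∈ s, μ (G i) :=
        Finset.sum_congr rfl fun i hi => lintegral_indicator_one (hG i hi)
    _ ≤ s.card * ε := by simpa using Finset.sum_le_card_nsmul s _ ε h

lemma Model.measure_maxWalk_mesh_le (M : Model Ω) {A : Set (ℕ → ℤ)} {θ : ℝ → ℝ}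
    (hθ : ∀ p : ℝ, p ∈ Set.Icc (0 : ℝ) 1 → ∀ (Ω' : Type) [MeasurableSpace Ω'],
      ∀ SM : StaticModel Ω' p, (SM.P {ω' | SM.walk ω' ∈ A}).toReal = θ p)
    {c : ℝ} (hc : ∀ p : ℝ, 1 / 2 ≤ p → p ≤ 1 → θ p ≤ c * (p - 1 / 2)) {n : ℕ} (hn : 0 < n)
    (i : ℕ) : M.P {ω | M.maxWalk (ratIcc (i / n) ((i + 1) / n)) ω ∈ A} ≤
      ENNReal.ofReal (max c 0 / 4) / n := by
  have hn' : (0 : ℝ) < n := Nat.cast_pos.2 hn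
  have hlen : ((((i : ℚ) + 1) / n : ℚ) : ℝ) - ((i / n : ℚ) : ℝ) = 1 / n := by
    push_cast
    field_simp
    ring
  convert M.measure_maxWalk_mem_le hθ hc (a := i / n) (b := (i + 1) / n) (by positivity)
    (by gcongr; linarith) using 1
  rw [hlen, ← ENNReal.ofReal_natCast, ← ENNReal.ofReal_div_of_pos hn']
  congr 1
  ring

theorem exceptional_times_thm1_general (M : Model Ω)
    (A : Set (ℕ → ℤ)) (hA : MeasurableSet A)
    (hInc : ∀ c c' : ℤ × ℤ → ℤ, (∀ z, c z = 1 ∨ c z = -1) → (∀ z, c' z = 1 ∨ c' z = -1) →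
      (∀ z, c z ≤ c' z) → walkOf c ∈ A → walkOf c' ∈ A)
    (θ : ℝ → ℝ)
    (hθ : ∀ p : ℝ, p ∈ Set.Icc (0 : ℝ) 1 → ∀ (Ω' : Type) [MeasurableSpace Ω'],
      ∀ SM : StaticModel Ω' p, (SM.P {ω' | SM.walk ω' ∈ A}).toReal = θ p)
    (c : ℝ) (hc : ∀ p : ℝ, 1 / 2 ≤ p → p ≤ 1 → θ p ≤ c * (p - 1 / 2)) :
    ∫⁻ ω, (({τ : ℝ | τ ∈ Set.Icc (0 : ℝ) 1 ∧
        (fun n => M.walk ω τ 0 0 n) ∈ A}.encard : ℕ∞) : ℝ≥0∞) ∂M.P < ⊤ := by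
  set G : ℕ → ℕ → Set Ω := fun n i => {ω | M.maxWalk (ratIcc (i / n) ((i + 1) / n)) ω ∈ A}
  have hG : ∀ n i, MeasurableSet (G n i) := fun n i =>
    M.measurableSet_maxWalk_mem hA (ratIcc_countable _ _)
  have hcount : ∀ ω n, (meshCount {τ | τ ∈ Icc 0 1 ∧ M.walk ω τ 0 0 ∈ A} n : ℝ≥0∞) ≤
      ∑ i ∈ Finset.range n, (G n i).indicator 1 ω := fun ω n =>
    meshCount_le_sum _ fun i _ ⟨τ, ⟨hτ01, hτA⟩, hτ⟩ => by
      have hmem : ω ∈ G n i :=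
        M.maxWalk_mem_of_walk_mem hInc ω hτ01.1 (by push_cast; exact hτ) hτA
      simp [hmem]
  have hmean : ∀ n, 0 < n →
      ∫⁻ ω, ∑ i ∈ Finset.range n, (G n i).indicator 1 ω ∂M.P ≤ ENNReal.ofReal (max c 0 / 4) :=
    fun n hn => (lintegral_sum_indicator_le (fun i _ => hG n i)
      fun i _ => M.measure_maxWalk_mesh_le hθ hc hn i).trans_eq (by
        rw [Finset.card_range,
          ENNReal.mul_div_cancel (Nat.cast_ne_zero.2 hn.ne') (ENNReal.natCast_ne_top n)])
  calc _ ≤ ∫⁻ ω, liminf (fun n => ∑ i ∈ Finset.range n, (G n i).indicator 1 ω) atTop ∂M.P :=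
        lintegral_mono fun ω => (encard_le_liminf_meshCount fun τ hτ => hτ.1).trans
          (liminf_le_liminf (.of_forall (hcount ω)))
    _ ≤ liminf (fun n => ∫⁻ ω, ∑ i ∈ Finset.range n, (G n i).indicator 1 ω ∂M.P) atTop :=
        lintegral_liminf_le fun n => Finset.measurable_sum _ fun i _ =>
          measurable_const.indicator (hG n i)
    _ ≤ ENNReal.ofReal (max c 0 / 4) :=
        liminf_le_of_frequently_le' ((eventually_gt_atTop 0).mono hmean).frequently
    _ < ⊤ := ENNReal.ofReal_lt_top

/-- **Tameness criterion.** If `{S₀ ∈ A}` is an increasing event of the arrow variables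
with `P_{1/2}(S₀ ∈ A) = 0` and `θ_A(p) = P_p(S₀ ∈ A) ≤ c(p − 1/2)` for `p ≥ 1/2`, then
the expected number of dynamical times `τ ∈ [0,1]` with `S₀^τ ∈ A` is finite. -/
theorem exceptional_times_thm1 (M : Model Ω)
    (A : Set (ℕ → ℤ)) (hA : MeasurableSet A)
    (hInc : ∀ c c' : ℤ × ℤ → ℤ, (∀ z, c z = 1 ∨ c z = -1) → (∀ z, c' z = 1 ∨ c' z = -1) →
      (∀ z, c z ≤ c' z) → walkOf c ∈ A → walkOf c' ∈ A)
    (θ : ℝ → ℝ)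
    (hθ : ∀ p : ℝ, p ∈ Set.Icc (0 : ℝ) 1 → ∀ (Ω' : Type) [MeasurableSpace Ω'],
      ∀ SM : StaticModel Ω' p, (SM.P {ω' | SM.walk ω' ∈ A}).toReal = θ p)
    (hzero : θ (1 / 2) = 0)
    (c : ℝ) (hc : ∀ p : ℝ, 1 / 2 ≤ p → p ≤ 1 → θ p ≤ c * (p - 1 / 2)) :
    ∫⁻ ω, (({τ : ℝ | τ ∈ Set.Icc (0 : ℝ) 1 ∧
        (fun n => M.walk ω τ 0 0 n) ∈ A}.encard : ℕ∞) : ℝ≥0∞) ∂M.P < ⊤ :=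
  exceptional_times_thm1_general M A hA hInc θ hθ c hc

end DyDWPaper
end
end

section
/- Let O = {π ∈ C([0,1]) : π(t) > −1 for all t∈[0,1] and π(1) > 1} and, for r ≥ 0, let O+r = {π ∈ C([0,1]) : ∃ π̄ ∈ O with |π − π̄|_∞ ≤ r}. For any α < 1/2 there exists c' ∈ (0,∞), independent of Δ and δ, such that for all δ ∈ (0,1] and all Δ ≥ δ, P(S̃ ∈ (O+Δ^α) \ O) ≤ c'·Δ^α, where S is a simple symmetric random walk. -/
open MeasureTheory ProbabilityTheory Filter Set
open scoped ENNReal NNReal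

noncomputable section

namespace DyDWPaper

variable {Ω Ω' : Type} [MeasurableSpace Ω] [MeasurableSpace Ω']

variable {Ω : Type} [MeasurableSpace Ω]

/-!
Let `n = ⌊δ⁻²⌋`. A rescaled walk that lies within `r` of `O` but not in `O` either ends in a
window of width `r + 2δ` just below `1 + δ`, or reaches `-1` without going below `-(1 + r + δ)`.
Since `C(n, n/2) ≤ 2ⁿ / √n`, each value of `S_n` has probability at most `1/√n ≤ 2δ`, so the
first event has probability `O((r/δ + 1) δ) = O(r)`. By the reflection principle, the walks that
reach one level but not a lower one are counted by two windows of their endpoint, so the second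
event is `O(r)` as well. Taking `r = Δ^α`, the `δ`-terms are absorbed since `δ ≤ min Δ 1` and
`0 ≤ α ≤ 1` give `δ ≤ Δ^α`.
-/

open scoped Finset

theorem centralBinom_sq_mul_le (n : ℕ) : n.centralBinom ^ 2 * (2 * n + 1) ≤ 16 ^ n := by
  induction n with
  | zero => simp
  | succ n ih =>
    refine Nat.le_of_mul_le_mul_left ?_ (by positivity : 0 < (n + 1) ^ 2)
    calc (n + 1) ^ 2 * ((n + 1).centralBinom ^ 2 * (2 * (n + 1) + 1))
        = ((n + 1) * (n + 1).centralBinom) ^ 2 * (2 * n + 3) := by ring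
      _ = (n.centralBinom ^ 2 * (2 * n + 1)) * (4 * (2 * n + 1) * (2 * n + 3)) := by
          rw [Nat.succ_mul_centralBinom_succ]; ring
      _ ≤ 16 ^ n * (4 * (2 * n + 2) ^ 2) := Nat.mul_le_mul ih (by nlinarith)
      _ = (n + 1) ^ 2 * 16 ^ (n + 1) := by ring

theorem choose_half_sq_mul_le (m : ℕ) : m.choose (m / 2) ^ 2 * m ≤ 4 ^ m := by
  obtain ⟨a, rfl | rfl⟩ := Nat.even_or_odd' m
  · rw [Nat.mul_div_cancel_left a two_pos, ← Nat.centralBinom_eq_two_mul_choose, pow_mul]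
    calc a.centralBinom ^ 2 * (2 * a) ≤ a.centralBinom ^ 2 * (2 * a + 1) :=
          Nat.mul_le_mul_left _ (Nat.le_succ _)
      _ ≤ 16 ^ a := centralBinom_sq_mul_le a
      _ = (4 ^ 2) ^ a := by norm_num
  · have hpascal : (a + 1).centralBinom = 2 * (2 * a + 1).choose a := by
      rw [Nat.centralBinom_eq_two_mul_choose, show 2 * (a + 1) = 2 * a + 1 + 1 by ring,
        Nat.choose_succ_succ, Nat.choose_symm_half]
      ring
    have h := centralBinom_sq_mul_le (a + 1)
    rw [hpascal] at h
    rw [show (2 * a + 1) / 2 = a by omega]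
    calc (2 * a + 1).choose a ^ 2 * (2 * a + 1)
        ≤ (2 * (2 * a + 1).choose a) ^ 2 * (2 * (a + 1) + 1) / 4 := by
          rw [Nat.le_div_iff_mul_le four_pos]
          nlinarith [Nat.zero_le ((2 * a + 1).choose a ^ 2)]
      _ ≤ 16 ^ (a + 1) / 4 := Nat.div_le_div_right h
      _ = 4 ^ (2 * a + 1) := by rw [pow_succ, pow_succ, pow_mul]; norm_num; omega

theorem choose_half_div_two_pow_le {m : ℕ} (hm : 1 ≤ m) :
    (m.choose (m / 2) : ℝ) / 2 ^ m ≤ (√m)⁻¹ := by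
  have hm' : (0 : ℝ) < m := by exact_mod_cast hm
  have h : (m.choose (m / 2) : ℝ) ^ 2 * m ≤ 4 ^ m := by exact_mod_cast choose_half_sq_mul_le m
  have hsq : ((m.choose (m / 2) : ℝ) / 2 ^ m) ^ 2 ≤ ((√m)⁻¹) ^ 2 := by
    rw [div_pow, inv_pow, Real.sq_sqrt hm'.le, ← pow_mul, mul_comm m 2, pow_mul,
      div_le_iff₀ (by positivity), inv_mul_eq_div, le_div_iff₀ hm']
    norm_num
    exact h
  exact (pow_le_pow_iff_left₀ (by positivity) (by positivity) two_ne_zero).1 hsq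

theorem card_filter_and_not_add_card_filter {α : Type*} (s : Finset α) {p q : α → Prop}
    [DecidablePred p] [DecidablePred q] (hqp : ∀ x, q x → p x) :
    #{x ∈ s | p x ∧ ¬ q x} + #{x ∈ s | q x} = #{x ∈ s | p x} := by
  rw [← Finset.card_filter_add_card_filter_not (s := {x ∈ s | p x}) q, Finset.filter_filter,
    Finset.filter_filter, add_comm]
  congr 2
  exact Finset.filter_congr fun x _ => ⟨fun h => ⟨hqp x h, h⟩, fun h => h.2⟩

def signOf (b : Bool) : ℤ := if b then 1 else -1

theorem signOf_not (b : Bool) : signOf (!b) = -signOf b := by cases b <;> rfl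

theorem signOf_eq_one_or (b : Bool) : signOf b = 1 ∨ signOf b = -1 := by
  cases b <;> simp [signOf]

/-- The walk with steps `signOf (e i)`; it stops moving after time `m`. -/
def signWalk {m : ℕ} (e : Fin m → Bool) (k : ℕ) : ℤ :=
  ∑ i : Fin m, if (i : ℕ) < k then signOf (e i) else 0

section SignWalk

variable {m : ℕ}

@[simp]
theorem signWalk_zero (e : Fin m → Bool) : signWalk e 0 = 0 := by simp [signWalk]

theorem signWalk_succ (e : Fin m → Bool) {k : ℕ} (hk : k < m) :
    signWalk e (k + 1) = signWalk e k + signOf (e ⟨k, hk⟩) := by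
  have hterm : ∀ i : Fin m, (if (i : ℕ) < k + 1 then signOf (e i) else 0)
      = (if (i : ℕ) < k then signOf (e i) else 0)
        + if i = ⟨k, hk⟩ then signOf (e i) else 0 := by
    intro i
    rcases lt_trichotomy (i : ℕ) k with h | h | h
    · simp [h, Nat.lt_succ_of_lt h, Fin.ext_iff, h.ne]
    · simp [h, Fin.ext_iff]
    · simp [Fin.ext_iff, h.not_gt, h.ne', show ¬ (i : ℕ) < k + 1 by omega]
  simp only [signWalk, hterm, Finset.sum_add_distrib, Finset.sum_ite_eq', Finset.mem_univ,
    if_true]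

theorem signWalk_of_le (e : Fin m → Bool) {k : ℕ} (hk : m ≤ k) :
    signWalk e k = signWalk e m :=
  Finset.sum_congr rfl fun i _ => by simp [i.2, i.2.trans_le hk]

theorem signWalk_sub_one_le_succ (e : Fin m → Bool) (k : ℕ) :
    signWalk e k - 1 ≤ signWalk e (k + 1) := by
  rcases lt_or_ge k m with hk | hk
  · rw [signWalk_succ e hk]
    rcases signOf_eq_one_or (e ⟨k, hk⟩) with h | h <;> omega
  · rw [signWalk_of_le e hk, signWalk_of_le e (hk.trans k.le_succ)]
    omega

theorem signWalk_self_eq (e : Fin m → Bool) :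
    signWalk e m = 2 * (#{i | e i = true} : ℤ) - m := by
  have hall : signWalk e m = ∑ i, signOf (e i) :=
    Finset.sum_congr rfl fun i _ => by simp [i.2]
  rw [hall, ← Finset.sum_filter_add_sum_filter_not Finset.univ (fun i => e i = true)]
  have htrue : ∀ i ∈ ({i | e i = true} : Finset (Fin m)), signOf (e i) = 1 := by
    intro i hi; simp_all [signOf]
  have hfalse : ∀ i ∈ ({i | ¬ e i = true} : Finset (Fin m)), signOf (e i) = -1 := by
    intro i hi; simp_all [signOf]
  rw [Finset.sum_congr rfl htrue, Finset.sum_congr rfl hfalse, Finset.sum_const,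
    Finset.sum_const]
  have hsplit :=
    Finset.card_filter_add_card_filter_not (s := Finset.univ) fun i : Fin m => e i = true
  simp only [Finset.card_univ, Fintype.card_fin] at hsplit
  push_cast [← hsplit]
  ring

theorem card_signWalk_eq_le (v : ℤ) :
    #{e : Fin m → Bool | signWalk e m = v} ≤ m.choose (m / 2) :=
  calc #{e : Fin m → Bool | signWalk e m = v}
      ≤ #(Finset.univ.powersetCard ((v + m) / 2).toNat : Finset (Finset (Fin m))) := by
        refine Finset.card_le_card_of_injOn (fun e => ({i | e i = true} : Finset (Fin m)))
          ?_ ?_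
        · intro e he
          have h := signWalk_self_eq e
          simp only [Finset.coe_filter, Finset.mem_univ, true_and, Set.mem_ofPred_eq] at he
          simp only [Finset.mem_coe, Finset.mem_powersetCard, Finset.subset_univ, true_and]
          omega
        · intro e₁ _ e₂ _ h
          funext i
          have := Finset.ext_iff.1 h i
          simp only [Finset.mem_filter, Finset.mem_univ, true_and] at this
          cases h₁ : e₁ i <;> cases h₂ : e₂ i <;> simp_all
    _ ≤ m.choose (m / 2) := by
        rw [Finset.card_powersetCard, Finset.card_univ, Fintype.card_fin]
        exact Nat.choose_le_middle _ m

theorem card_signWalk_mem_Ioc_le (a b : ℤ) :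
    #{e : Fin m → Bool | a < signWalk e m ∧ signWalk e m ≤ b}
      ≤ (b - a).toNat * m.choose (m / 2) :=
  calc #{e : Fin m → Bool | a < signWalk e m ∧ signWalk e m ≤ b}
      = ∑ v ∈ Finset.Ioc a b, #{e : Fin m → Bool | signWalk e m = v} := by
        rw [Finset.card_eq_sum_card_fiberwise (f := fun e => signWalk e m)
          (t := Finset.Ioc a b) (fun e he => by simpa using he)]
        refine Finset.sum_congr rfl fun v hv => congrArg Finset.card ?_
        ext e
        simp only [Finset.mem_filter, Finset.mem_univ, true_and, Finset.mem_Ioc] at hv ⊢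
        constructor
        · exact fun h => h.2
        · intro h; subst h; exact ⟨hv, rfl⟩
    _ ≤ ∑ _v ∈ Finset.Ioc a b, m.choose (m / 2) :=
        Finset.sum_le_sum fun v _ => card_signWalk_eq_le v
    _ = (b - a).toNat * m.choose (m / 2) := by simp

end SignWalk

section Reflection

open scoped Classical

variable {m : ℕ} {j : ℤ}

/-- The first time `signWalk e` is at or below `-j`; it is `0` if there is no such time. -/
noncomputable def hitTime (j : ℤ) (e : Fin m → Bool) : ℕ := sInf {k | signWalk e k ≤ -j}

noncomputable def reflectAfterHit (j : ℤ) (e : Fin m → Bool) : Fin m → Bool :=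
  fun i => if (i : ℕ) < hitTime j e then e i else !e i

theorem lt_signWalk_of_lt_hitTime (e : Fin m → Bool) {k : ℕ} (hk : k < hitTime j e) :
    -j < signWalk e k :=
  lt_of_not_ge fun h => (Nat.sInf_le h).not_gt hk

theorem hitTime_le (e : Fin m → Bool) (h : ∃ k, signWalk e k ≤ -j) : hitTime j e ≤ m := by
  obtain ⟨k, hk⟩ := h
  rcases le_total k m with hkm | hmk
  · exact (Nat.sInf_le hk).trans hkm
  · exact Nat.sInf_le (show signWalk e m ≤ -j by rwa [← signWalk_of_le e hmk])

theorem signWalk_hitTime (hj : 0 ≤ j) (e : Fin m → Bool) (h : ∃ k, signWalk e k ≤ -j) :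
    signWalk e (hitTime j e) = -j := by
  have hle : signWalk e (hitTime j e) ≤ -j := Nat.sInf_mem h
  rcases (hitTime j e).eq_zero_or_pos with h0 | hpos
  · rw [h0, signWalk_zero] at hle ⊢
    omega
  · obtain ⟨t, ht⟩ := Nat.exists_eq_add_one.2 hpos
    have hbefore := lt_signWalk_of_lt_hitTime e (show t < hitTime j e by omega)
    have hstep := signWalk_sub_one_le_succ e t
    rw [← ht] at hstep
    omega

theorem signWalk_reflectAfterHit_of_le (e : Fin m → Bool) {k : ℕ} (hk : k ≤ hitTime j e) :
    signWalk (reflectAfterHit j e) k = signWalk e k :=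
  Finset.sum_congr rfl fun i _ => by
    by_cases hik : (i : ℕ) < k
    · simp [reflectAfterHit, hik, hik.trans_le hk]
    · simp [hik]

theorem signWalk_reflectAfterHit_of_ge (hj : 0 ≤ j) (e : Fin m → Bool)
    (h : ∃ k, signWalk e k ≤ -j) {k : ℕ} (hk : hitTime j e ≤ k) :
    signWalk (reflectAfterHit j e) k = -2 * j - signWalk e k := by
  have hsum :
      signWalk (reflectAfterHit j e) k + signWalk e k = 2 * signWalk e (hitTime j e) := by
    simp only [signWalk, ← Finset.sum_add_distrib, Finset.mul_sum]
    refine Finset.sum_congr rfl fun i _ => ?_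
    by_cases hiT : (i : ℕ) < hitTime j e
    · simp [reflectAfterHit, hiT, hiT.trans_le hk]
      ring
    · by_cases hik : (i : ℕ) < k <;> simp [reflectAfterHit, hiT, hik, signOf_not]
  rw [signWalk_hitTime hj e h] at hsum
  omega

theorem exists_signWalk_reflectAfterHit_le (hj : 0 ≤ j) (e : Fin m → Bool)
    (h : ∃ k, signWalk e k ≤ -j) : ∃ k, signWalk (reflectAfterHit j e) k ≤ -j :=
  ⟨hitTime j e, by rw [signWalk_reflectAfterHit_of_le e le_rfl, signWalk_hitTime hj e h]⟩

theorem hitTime_reflectAfterHit (hj : 0 ≤ j) (e : Fin m → Bool)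
    (h : ∃ k, signWalk e k ≤ -j) :
    hitTime j (reflectAfterHit j e) = hitTime j e := by
  refine le_antisymm (Nat.sInf_le ?_) (le_of_not_gt fun hlt => ?_)
  · show signWalk (reflectAfterHit j e) (hitTime j e) ≤ -j
    rw [signWalk_reflectAfterHit_of_le e le_rfl, signWalk_hitTime hj e h]
  · have hle : signWalk (reflectAfterHit j e) (hitTime j (reflectAfterHit j e)) ≤ -j :=
      Nat.sInf_mem (exists_signWalk_reflectAfterHit_le hj e h)
    rw [signWalk_reflectAfterHit_of_le e hlt.le] at hle
    exact hle.not_gt (lt_signWalk_of_lt_hitTime e hlt)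

theorem reflectAfterHit_involutive (hj : 0 ≤ j) (e : Fin m → Bool)
    (h : ∃ k, signWalk e k ≤ -j) :
    reflectAfterHit j (reflectAfterHit j e) = e := by
  funext i
  by_cases hi : (i : ℕ) < hitTime j e <;>
    simp [reflectAfterHit, hitTime_reflectAfterHit hj e h, hi]

/-- The reflection principle: reflecting after the hitting time of `-j` matches the paths that
hit `-j` and end above it with those that end below it. -/
theorem card_exists_signWalk_le (hj : 0 ≤ j) :
    #{e : Fin m → Bool | ∃ k, signWalk e k ≤ -j}
      = #{e : Fin m → Bool | signWalk e m ≤ -j}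
        + #{e : Fin m → Bool | signWalk e m < -j} := by
  rw [← card_filter_and_not_add_card_filter _ fun e (h : signWalk e m ≤ -j) => ⟨m, h⟩,
    add_comm]
  congr 1
  refine Finset.card_bij' (fun e _ => reflectAfterHit j e) (fun e _ => reflectAfterHit j e)
    ?_ ?_ ?_ ?_
  · intro e he
    simp only [Finset.mem_filter, Finset.mem_univ, true_and, not_le] at he ⊢
    rw [signWalk_reflectAfterHit_of_ge hj e he.1 (hitTime_le e he.1)]
    omega
  · intro e he
    simp only [Finset.mem_filter, Finset.mem_univ, true_and, not_le] at he ⊢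
    have hhit : ∃ k, signWalk e k ≤ -j := ⟨m, he.le⟩
    refine ⟨exists_signWalk_reflectAfterHit_le hj e hhit, ?_⟩
    rw [signWalk_reflectAfterHit_of_ge hj e hhit (hitTime_le e hhit)]
    omega
  · intro e he
    simp only [Finset.mem_filter, Finset.mem_univ, true_and] at he
    exact reflectAfterHit_involutive hj e he.1
  · intro e he
    simp only [Finset.mem_filter, Finset.mem_univ, true_and] at he
    exact reflectAfterHit_involutive hj e ⟨m, he.le⟩

theorem card_hit_not_hit_le {c₁ c₂ : ℤ} (hc₁ : 0 ≤ c₁) (hc₁₂ : c₁ ≤ c₂) :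
    #{e : Fin m → Bool | (∃ k, signWalk e k ≤ -c₁) ∧ ∀ k, -c₂ < signWalk e k}
      ≤ 2 * ((c₂ - c₁).toNat * m.choose (m / 2)) := by
  -- Hitting `-c₁` but not `-c₂` is the difference of two hitting events; by reflection each is
  -- a sum of two endpoint counts, and the differences of those are endpoint windows.
  have hhit := card_filter_and_not_add_card_filter (Finset.univ : Finset (Fin m → Bool))
    (p := fun e => ∃ k, signWalk e k ≤ -c₁) (q := fun e => ∃ k, signWalk e k ≤ -c₂)
    fun e ⟨k, hk⟩ => ⟨k, by omega⟩
  have hend := card_filter_and_not_add_card_filter (Finset.univ : Finset (Fin m → Bool))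
    (p := fun e => signWalk e m ≤ -c₁) (q := fun e => signWalk e m ≤ -c₂)
    fun e h => by omega
  have hend' := card_filter_and_not_add_card_filter (Finset.univ : Finset (Fin m → Bool))
    (p := fun e => signWalk e m < -c₁) (q := fun e => signWalk e m < -c₂)
    fun e h => by omega
  have hI := card_signWalk_mem_Ioc_le (m := m) (-c₂) (-c₁)
  have hI' := card_signWalk_mem_Ioc_le (m := m) (-c₂ - 1) (-c₁ - 1)
  simp only [not_exists, not_le] at hhit
  simp only [not_le, not_lt] at hend hend'
  rw [card_exists_signWalk_le hc₁, card_exists_signWalk_le (hc₁.trans hc₁₂)] at hhit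
  rw [show -c₁ - -c₂ = c₂ - c₁ by ring] at hI
  rw [show -c₁ - 1 - (-c₂ - 1) = c₂ - c₁ by ring] at hI'
  have hIeq : #{e : Fin m → Bool | signWalk e m ≤ -c₁ ∧ -c₂ < signWalk e m}
      = #{e : Fin m → Bool | -c₂ < signWalk e m ∧ signWalk e m ≤ -c₁} := by
    simp only [and_comm]
  have hIeq' : #{e : Fin m → Bool | signWalk e m < -c₁ ∧ -c₂ ≤ signWalk e m}
      = #{e : Fin m → Bool | -c₂ - 1 < signWalk e m ∧ signWalk e m ≤ -c₁ - 1} := by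
    congr 1
    exact Finset.filter_congr fun e _ => by omega
  omega

end Reflection

attribute [instance] RW.prob

def RW.signs (R : RW Ω) (m : ℕ) (ω : Ω) : Fin m → Bool := fun i => decide (R.X i ω = 1)

theorem RW.X_eq_signOf_decide (R : RW Ω) (i : ℕ) (ω : Ω) :
    R.X i ω = signOf (decide (R.X i ω = 1)) := by
  rcases R.vals i ω with h | h <;> simp [h, signOf]

theorem RW.S_succ (R : RW Ω) (k : ℕ) (ω : Ω) : R.S (k + 1) ω = R.S k ω + R.X k ω :=
  Finset.sum_range_succ _ _

theorem RW.abs_S_succ_sub_le (R : RW Ω) (ω : Ω) (k : ℕ) :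
    |R.S (k + 1) ω - R.S k ω| ≤ 1 := by
  rw [R.S_succ, add_sub_cancel_left]
  rcases R.vals k ω with h | h <;> simp [h]

theorem RW.S_eq_signWalk (R : RW Ω) (ω : Ω) {k m : ℕ} (hk : k ≤ m) :
    R.S k ω = signWalk (R.signs m ω) k := by
  induction k with
  | zero => simp [RW.S]
  | succ k ih =>
    rw [R.S_succ, ih (Nat.le_of_succ_le hk), signWalk_succ _ hk, R.X_eq_signOf_decide]
    rfl

theorem RW.measure_X_eq_signOf (R : RW Ω) (i : ℕ) (b : Bool) :
    R.P (R.X i ⁻¹' {signOf b}) = 2⁻¹ := by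
  have := R.prob
  have hfair : R.P (R.X i ⁻¹' {1}) = 2⁻¹ := by rw [← one_div, ← R.fair i]; rfl
  cases b
  · have hcompl : R.X i ⁻¹' {signOf false} = (R.X i ⁻¹' {1})ᶜ := by
      ext ω
      rcases R.vals i ω with h | h <;> simp [h, signOf]
    rw [hcompl, prob_compl_eq_one_sub (R.meas i (measurableSet_singleton 1)), hfair,
      ENNReal.one_sub_inv_two]
  · exact hfair

theorem RW.measure_signs_eq (R : RW Ω) (m : ℕ) (e : Fin m → Bool) :
    R.P (R.signs m ⁻¹' {e}) = (2 ^ m)⁻¹ := by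
  have hcyl : R.signs m ⁻¹' {e}
      = ⋂ i ∈ (Finset.univ : Finset (Fin m)), R.X i ⁻¹' {signOf (e i)} := by
    ext ω
    simp only [Set.mem_preimage, Set.mem_singleton_iff, Set.mem_iInter, Finset.mem_univ,
      forall_const, funext_iff]
    refine forall_congr' fun i => ?_
    rw [R.X_eq_signOf_decide i ω]
    cases e i <;> cases h : decide (R.X i ω = 1) <;> simp [signOf, RW.signs, h]
  rw [hcyl, (R.indep.precomp Fin.val_injective).measure_inter_preimage_eq_mul _
      fun i _ => measurableSet_singleton _]
  simp [R.measure_X_eq_signOf, ENNReal.inv_pow]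

theorem RW.measureReal_signs_mem_le (R : RW Ω) {m : ℕ} (hm : 1 ≤ m)
    {s : Finset (Fin m → Bool)} {N : ℝ} (hs : (#s : ℝ) ≤ N * m.choose (m / 2)) :
    R.P.real (R.signs m ⁻¹' s) ≤ N / √m := by
  have hN : 0 ≤ N := by
    by_contra! hN
    have : 0 < (m.choose (m / 2) : ℝ) := by exact_mod_cast Nat.choose_pos (Nat.div_le_self m 2)
    nlinarith [(#s).cast_nonneg (α := ℝ)]
  calc R.P.real (R.signs m ⁻¹' s) ≤ ∑ e ∈ s, R.P.real (R.signs m ⁻¹' {e}) := by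
        rw [← Set.biUnion_preimage_singleton]
        exact measureReal_biUnion_finset_le _ _
    _ = #s / 2 ^ m := by simp [Measure.real, R.measure_signs_eq, div_eq_mul_inv]
    _ ≤ N * (m.choose (m / 2) / 2 ^ m) := by rw [← mul_div_assoc]; gcongr
    _ ≤ N * (√m)⁻¹ := mul_le_mul_of_nonneg_left (choose_half_div_two_pow_le hm) hN
    _ = N / √m := (div_eq_mul_inv _ _).symm

theorem toNat_floor_sub_floor_le {x y : ℝ} (hxy : x ≤ y) :
    ((⌊y⌋ - ⌊x⌋).toNat : ℝ) ≤ y - x + 1 := by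
  rw [← Int.cast_natCast, Int.toNat_of_nonneg (sub_nonneg.2 (Int.floor_mono hxy))]
  push_cast
  linarith [Int.floor_le y, Int.lt_floor_add_one x]

theorem toNat_ceil_sub_ceil_le {x y : ℝ} (hxy : x ≤ y) :
    ((⌈y⌉ - ⌈x⌉).toNat : ℝ) ≤ y - x + 1 := by
  rw [← Int.cast_natCast, Int.toNat_of_nonneg (sub_nonneg.2 (Int.ceil_mono hxy))]
  push_cast
  linarith [Int.le_ceil x, Int.ceil_lt_add_one y]

theorem RW.measureReal_S_mem_Ioc_le (R : RW Ω) {m : ℕ} (hm : 1 ≤ m) {x y : ℝ}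
    (hxy : x ≤ y) :
    R.P.real {ω | x < R.S m ω ∧ (R.S m ω : ℝ) ≤ y} ≤ (y - x + 1) / √m := by
  have hsub : {ω | x < R.S m ω ∧ (R.S m ω : ℝ) ≤ y}
      ⊆ R.signs m ⁻¹'
          ↑({e | ⌊x⌋ < signWalk e m ∧ signWalk e m ≤ ⌊y⌋} : Finset (Fin m → Bool)) := by
    intro ω hω
    simpa [← R.S_eq_signWalk ω le_rfl, Int.floor_lt, Int.le_floor] using hω
  refine (measureReal_mono hsub).trans (R.measureReal_signs_mem_le hm ?_)
  calc _ ≤ (((⌊y⌋ - ⌊x⌋).toNat * m.choose (m / 2) : ℕ) : ℝ) := by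
        exact_mod_cast card_signWalk_mem_Ioc_le _ _
    _ ≤ (y - x + 1) * m.choose (m / 2) := by push_cast; gcongr; exact toNat_floor_sub_floor_le hxy

theorem RW.measureReal_hit_not_hit_le (R : RW Ω) {m : ℕ} (hm : 1 ≤ m) {x y : ℝ} (hx : 0 ≤ x)
    (hxy : x ≤ y) :
    R.P.real {ω | (∃ k ≤ m, (R.S k ω : ℝ) ≤ -x) ∧ ∀ k ≤ m, -y < (R.S k ω : ℝ)}
      ≤ 2 * (y - x + 1) / √m := by
  classical
  have hsub : {ω | (∃ k ≤ m, (R.S k ω : ℝ) ≤ -x) ∧ ∀ k ≤ m, -y < (R.S k ω : ℝ)}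
      ⊆ R.signs m ⁻¹' ↑({e | (∃ k, signWalk e k ≤ -⌈x⌉) ∧ ∀ k, -⌈y⌉ < signWalk e k}
          : Finset (Fin m → Bool)) := by
    rintro ω ⟨⟨k, hkm, hk⟩, hall⟩
    simp only [Finset.coe_filter, Finset.mem_univ, true_and, Set.mem_preimage, Set.mem_ofPred_eq]
    refine ⟨⟨k, ?_⟩, fun k' => ?_⟩
    · rw [← R.S_eq_signWalk ω hkm, le_neg, Int.ceil_le]
      push_cast
      linarith
    · rcases le_total k' m with hk'm | hmk'
      · rw [← R.S_eq_signWalk ω hk'm, neg_lt, Int.lt_ceil]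
        push_cast
        linarith [hall k' hk'm]
      · rw [signWalk_of_le _ hmk', ← R.S_eq_signWalk ω le_rfl, neg_lt, Int.lt_ceil]
        push_cast
        linarith [hall m le_rfl]
  refine (measureReal_mono hsub).trans (R.measureReal_signs_mem_le hm ?_)
  calc _ ≤ ((2 * ((⌈y⌉ - ⌈x⌉).toNat * m.choose (m / 2)) : ℕ) : ℝ) := by
        exact_mod_cast card_hit_not_hit_le (Int.ceil_nonneg hx) (Int.ceil_mono hxy)
    _ ≤ 2 * (y - x + 1) * m.choose (m / 2) := by
        push_cast
        rw [← mul_assoc]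
        gcongr
        exact toNat_ceil_sub_ceil_le hxy

theorem interp_natCast (w : ℕ → ℤ) (k : ℕ) : interp w k = w k := by
  simp [interp]

theorem exists_le_interp (w : ℕ → ℤ) {t : ℝ} (ht : 0 ≤ t) :
    ∃ k ≤ ⌊t⌋₊ + 1, (w k : ℝ) ≤ interp w t := by
  have h₁ : (⌊t⌋₊ : ℝ) ≤ t := Nat.floor_le ht
  have h₂ : t < ⌊t⌋₊ + 1 := Nat.lt_floor_add_one t
  rcases le_total (w ⌊t⌋₊ : ℝ) (w (⌊t⌋₊ + 1)) with h | h
  · refine ⟨⌊t⌋₊, Nat.le_succ _, ?_⟩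
    unfold interp
    nlinarith
  · refine ⟨⌊t⌋₊ + 1, le_rfl, ?_⟩
    unfold interp
    nlinarith

theorem abs_interp_sub_le (w : ℕ → ℤ) (hw : ∀ k, |w (k + 1) - w k| ≤ 1) {t : ℝ}
    (ht : 0 ≤ t) :
    |interp w t - w ⌊t⌋₊| ≤ 1 := by
  have hfrac : |t - ⌊t⌋₊| ≤ 1 := by
    rw [abs_le]
    constructor <;> linarith [Nat.floor_le ht, Nat.lt_floor_add_one t]
  have hstep : |(w (⌊t⌋₊ + 1) : ℝ) - w ⌊t⌋₊| ≤ 1 := by exact_mod_cast hw ⌊t⌋₊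
  calc |interp w t - w ⌊t⌋₊|
        = |t - ⌊t⌋₊| * |(w (⌊t⌋₊ + 1) : ℝ) - w ⌊t⌋₊| := by
        rw [← abs_mul]; unfold interp; ring_nf
    _ ≤ 1 := mul_le_one₀ hfrac (abs_nonneg _) hstep

theorem lt_of_mem_OPlus {f : ℝ → ℝ} {r : ℝ} (hf : f ∈ OPlus r) :
    (∀ t ∈ Icc (0 : ℝ) 1, -1 - r < f t) ∧ 1 - r < f 1 := by
  obtain ⟨g, -, ⟨hg, hg1⟩, hfg⟩ := hf
  refine ⟨fun t ht => ?_, ?_⟩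
  · linarith [hg t ht, (abs_le.1 (hfg t ht)).1]
  · linarith [(abs_le.1 (hfg 1 ⟨zero_le_one, le_rfl⟩)).1]

theorem rescale_interp_mem_OPlus_not_OEvent {w : ℕ → ℤ} (hw : ∀ k, |w (k + 1) - w k| ≤ 1)
    {δ r : ℝ} (hδ : 0 < δ) (hO : rescale δ (interp w) ∈ OPlus r)
    (hnO : ¬ OEvent (rescale δ (interp w))) :
    (1 - r - δ < δ * w ⌊1 / δ ^ 2⌋₊ ∧ δ * w ⌊1 / δ ^ 2⌋₊ ≤ 1 + δ) ∨
      ((∃ k ≤ ⌊1 / δ ^ 2⌋₊ + 1, δ * w k ≤ -1) ∧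
        ∀ k ≤ ⌊1 / δ ^ 2⌋₊ + 1, -(1 + r + δ) < δ * w k) := by
  set n := ⌊1 / δ ^ 2⌋₊
  have hδ2 : 0 < δ ^ 2 := by positivity
  have hlattice : ∀ k : ℕ, rescale δ (interp w) (k * δ ^ 2) = δ * w k := fun k => by
    simp only [rescale, mul_div_cancel_right₀ _ hδ2.ne', interp_natCast]
  have hfloor : ∀ t ∈ Icc (0 : ℝ) 1, ⌊t / δ ^ 2⌋₊ ≤ n := fun t ht =>
    Nat.floor_le_floor (div_le_div_of_nonneg_right ht.2 hδ2.le)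
  obtain ⟨hlow, hend⟩ := lt_of_mem_OPlus hO
  have hwalk : ∀ k ≤ n + 1, -(1 + r + δ) < δ * w k := by
    have hle : ∀ k ≤ n, -1 - r < δ * w k := fun k hk => by
      rw [← hlattice]
      refine hlow _ ⟨by positivity, ?_⟩
      rw [← le_div_iff₀ hδ2]
      exact (Nat.cast_le.2 hk).trans (Nat.floor_le (by positivity))
    intro k hk
    rcases Nat.lt_or_ge k (n + 1) with hkn | hkn
    · linarith [hle k (Nat.lt_succ_iff.1 hkn)]
    · obtain rfl : k = n + 1 := le_antisymm hk hkn
      have hstep : (w n : ℝ) - 1 ≤ w (n + 1) := by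
        have := (abs_le.1 (hw n)).1
        exact_mod_cast (by omega : w n - 1 ≤ w (n + 1))
      nlinarith [hle n le_rfl]
  simp only [OEvent, not_and_or, not_forall, not_lt, exists_prop] at hnO
  rcases hnO with ⟨t, ht, hft⟩ | hnend
  · right
    obtain ⟨k, hk, hwk⟩ := exists_le_interp w (div_nonneg ht.1 hδ2.le)
    refine ⟨⟨k, hk.trans (Nat.succ_le_succ (hfloor t ht)), ?_⟩, hwalk⟩
    have : δ * interp w (t / δ ^ 2) ≤ -1 := hft
    nlinarith
  · left
    have hclose := abs_le.1 (abs_interp_sub_le w hw (by positivity : (0 : ℝ) ≤ 1 / δ ^ 2))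
    have hf1 : rescale δ (interp w) 1 = δ * interp w (1 / δ ^ 2) := rfl
    rw [hf1] at hnend hend
    constructor <;> nlinarith [hclose.1, hclose.2]

theorem inv_sqrt_le_two_mul {δ x : ℝ} (hδ : 0 < δ) (hx : 1 / (4 * δ ^ 2) ≤ x) :
    (√x)⁻¹ ≤ 2 * δ := by
  rw [inv_le_comm₀ (Real.sqrt_pos.2 (lt_of_lt_of_le (by positivity) hx)) (by positivity),
    Real.le_sqrt (by positivity) (le_trans (by positivity) hx)]
  calc (2 * δ)⁻¹ ^ 2 = 1 / (4 * δ ^ 2) := by ring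
    _ ≤ x := hx

theorem RW.measureReal_rescale_mem_OPlus_not_OEvent_le (R : RW Ω) {δ r : ℝ} (hδ : 0 < δ)
    (hδr : δ ≤ r) :
    R.P.real {ω | rescale δ (R.path ω) ∈ OPlus r ∧ ¬ OEvent (rescale δ (R.path ω))}
      ≤ 20 * r := by
  rcases le_or_gt 1 (20 * r) with hr | hr
  · exact measureReal_le_one.trans hr
  set n := ⌊1 / δ ^ 2⌋₊
  have hn : 1 / (4 * δ ^ 2) ≤ n := by
    have hu : 400 ≤ 1 / δ ^ 2 := by
      rw [le_div_iff₀ (by positivity)]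
      nlinarith
    have := Nat.lt_floor_add_one (1 / δ ^ 2)
    rw [show 1 / (4 * δ ^ 2) = 1 / δ ^ 2 / 4 by ring]
    linarith
  have hn1 : 1 ≤ n := by
    have : (1 : ℝ) ≤ n := le_trans (by rw [le_div_iff₀ (by positivity)]; nlinarith) hn
    exact_mod_cast this
  have hsqrt : (√n)⁻¹ ≤ 2 * δ := inv_sqrt_le_two_mul hδ hn
  have hsqrt' : (√(n + 1 : ℕ))⁻¹ ≤ 2 * δ :=
    inv_sqrt_le_two_mul hδ (by push_cast; linarith)
  have hsub : {ω | rescale δ (R.path ω) ∈ OPlus r ∧ ¬ OEvent (rescale δ (R.path ω))}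
      ⊆ {ω | (1 - r - δ) / δ < R.S n ω ∧ (R.S n ω : ℝ) ≤ (1 + δ) / δ} ∪
        {ω | (∃ k ≤ n + 1, (R.S k ω : ℝ) ≤ -(1 / δ)) ∧
          ∀ k ≤ n + 1, -((1 + r + δ) / δ) < (R.S k ω : ℝ)} := by
    rintro ω ⟨hO, hnO⟩
    rcases rescale_interp_mem_OPlus_not_OEvent (w := (R.S · ω)) (R.abs_S_succ_sub_le ω) hδ
      hO hnO with ⟨hlow, hhigh⟩ | ⟨⟨k, hk, hhit⟩, habove⟩
    · left
      constructor
      · rw [div_lt_iff₀ hδ]; linarith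
      · rw [le_div_iff₀ hδ]; linarith
    · right
      refine ⟨⟨k, hk, ?_⟩, fun k hk => ?_⟩
      · rw [← neg_div, le_div_iff₀ hδ]; linarith
      · rw [← neg_div, div_lt_iff₀ hδ]; linarith [habove k hk]
  calc _ ≤ _ := measureReal_mono hsub
    _ ≤ _ := measureReal_union_le _ _
    _ ≤ ((1 + δ) / δ - (1 - r - δ) / δ + 1) / √n
          + 2 * ((1 + r + δ) / δ - 1 / δ + 1) / √(n + 1 : ℕ) := by
        gcongr
        · exact R.measureReal_S_mem_Ioc_le hn1 (by gcongr; linarith)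
        · exact R.measureReal_hit_not_hit_le (by omega) (by positivity) (by gcongr; linarith)
    _ = (r / δ + 3) * (√n)⁻¹ + 2 * (r / δ + 2) * (√(n + 1 : ℕ))⁻¹ := by
        field_simp
        ring
    _ ≤ (r / δ + 3) * (2 * δ) + 2 * (r / δ + 2) * (2 * δ) := by
        have : 0 ≤ r / δ := div_nonneg (hδ.le.trans hδr) hδ.le
        gcongr
    _ = 6 * r + 14 * δ := by field_simp; ring
    _ ≤ 20 * r := by linarith

theorem le_rpow_of_le {δ Δ α : ℝ} (hδ : δ ≤ 1) (hδΔ : δ ≤ Δ) (hΔ : 0 < Δ) (hα₀ : 0 ≤ α)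
    (hα₁ : α ≤ 1) : δ ≤ Δ ^ α := by
  rcases le_total Δ 1 with hΔ1 | h1Δ
  · exact hδΔ.trans (by simpa using Real.rpow_le_rpow_of_exponent_ge hΔ hΔ1 hα₁)
  · exact hδ.trans (Real.one_le_rpow h1Δ hα₀)

/-- For any `0 < α < 1/2` there is `c' ∈ (0,∞)`, independent of `Δ` and `δ`, such that
`P(S̃ ∈ (O+Δ^α) \ O) ≤ c'·Δ^α`, where `S` is a simple symmetric random walk. -/
theorem exceptional_times_thm5 (R : RW Ω) (α : ℝ) (hα : 0 < α) (hα2 : α < 1 / 2) :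
    ∃ c' : ℝ, 0 < c' ∧ ∀ δ : ℝ, δ ∈ Set.Ioc (0 : ℝ) 1 → ∀ Δ : ℝ, δ ≤ Δ →
      (R.P {ω | rescale δ (R.path ω) ∈ OPlus (Δ ^ α) ∧
        ¬ OEvent (rescale δ (R.path ω))}).toReal ≤ c' * Δ ^ α :=
  ⟨20, by norm_num, fun δ ⟨hδ₀, hδ₁⟩ Δ hδΔ =>
    R.measureReal_rescale_mem_OPlus_not_OEvent_le hδ₀
      (le_rpow_of_le hδ₁ hδΔ (hδ₀.trans_le hδΔ) hα.le (by linarith))⟩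

end DyDWPaper
end
end

section
/- For γ > 2 let d_k = 2(⌊γ^k/2⌋+1), t_0 = 0, x_0 = 0, t_{k+1} = t_k + d_k², x_{k+1} = x_k + d_k, and let ∂^γ : [0,∞) → ℝ be the right-continuous step function with ∂^γ(t) = x_n − d_n for t ∈ [t_n, t_{n+1}). For K > 0, let γ(K) be the solution in (2,∞) of K = (γ−2)√((γ+1)/(γ−1)). Then for all t ≥ 0, ∂^{γ(K)}(t) ≥ −3 − K√t. Moreover, γ ↦ (γ−2)√((γ+1)/(γ−1)) is a continuous increasing function mapping (2,∞) onto (0,∞), so γ(K) is well defined for every K > 0. -/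
open MeasureTheory ProbabilityTheory Filter Set
open scoped ENNReal NNReal

noncomputable section

namespace DyDWPaper

variable {Ω Ω' : Type} [MeasurableSpace Ω] [MeasurableSpace Ω']

variable {Ω : Type} [MeasurableSpace Ω]

/-! On `[t_n, t_{n+1})` we have `∂^γ = x_n − d_n`, and `d_n ≤ γ^n + 2`, `x_n ≥ (γ^n − 1)/(γ − 1)`,
so `∂^γ ≥ −3 − (γ − 2)(γ^n − 1)/(γ − 1)`. On the other hand
`t_n ≥ (γ^{2n} − 1)/(γ² − 1) ≥ (γ^n − 1)²/(γ² − 1)`, and `K(γ)` is exactly the constant with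
`K(γ)·(γ^n − 1)/√(γ² − 1) = (γ − 2)(γ^n − 1)/(γ − 1)`, whence `∂^γ(t) ≥ −3 − K(γ)√t_n ≥ −3 − K(γ)√t`. -/

section Sequences

variable (γ : ℝ)

lemma pow_lt_dseq (k : ℕ) : γ ^ k < dseq γ k := by
  have := Int.sub_one_lt_floor (γ ^ k / 2)
  rw [dseq]
  push_cast
  linarith

lemma dseq_le_pow_add_two (k : ℕ) : (dseq γ k : ℝ) ≤ γ ^ k + 2 := by
  have := Int.floor_le (γ ^ k / 2)
  rw [dseq]
  push_cast
  linarith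

lemma geom_sum_le_xseq (n : ℕ) : ∑ k ∈ Finset.range n, γ ^ k ≤ (xseq γ n : ℝ) := by
  rw [xseq, Int.cast_sum]
  exact Finset.sum_le_sum fun k _ => (pow_lt_dseq γ k).le

variable {γ}

lemma two_le_dseq (hγ : 0 ≤ γ) (k : ℕ) : 2 ≤ dseq γ k := by
  have : 0 ≤ ⌊γ ^ k / 2⌋ := Int.floor_nonneg.mpr (by positivity)
  rw [dseq]
  omega

lemma geom_sum_sq_le_tseq (hγ : 0 ≤ γ) (n : ℕ) :
    ∑ k ∈ Finset.range n, (γ ^ 2) ^ k ≤ (tseq γ n : ℝ) := by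
  rw [tseq, Int.cast_sum]
  refine Finset.sum_le_sum fun k _ => ?_
  rw [← pow_mul, mul_comm, pow_mul, Int.cast_pow]
  exact pow_le_pow_left₀ (by positivity) (pow_lt_dseq γ k).le 2

lemma le_tseq (hγ : 0 ≤ γ) (n : ℕ) : (n : ℤ) ≤ tseq γ n := by
  calc (n : ℤ) = ∑ _k ∈ Finset.range n, 1 := by simp
    _ ≤ tseq γ n := Finset.sum_le_sum fun k _ => by nlinarith [two_le_dseq hγ k]

lemma tseq_sSup_le (hγ : 0 ≤ γ) {t : ℝ} (ht : 0 ≤ t) :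
    (tseq γ (sSup {n : ℕ | (tseq γ n : ℝ) ≤ t}) : ℝ) ≤ t := by
  have hne : {n : ℕ | (tseq γ n : ℝ) ≤ t}.Nonempty := ⟨0, by simpa [tseq] using ht⟩
  have hbdd : BddAbove {n : ℕ | (tseq γ n : ℝ) ≤ t} :=
    ⟨⌊t⌋₊, fun n hn => Nat.le_floor <|
      (by exact_mod_cast le_tseq hγ n : (n : ℝ) ≤ tseq γ n).trans hn⟩
  exact Nat.sSup_mem hne hbdd

end Sequences

section Kfun

lemma Kfun_pos {γ : ℝ} (hγ : 2 < γ) : 0 < Kfun γ :=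
  mul_pos (by linarith) (Real.sqrt_pos.mpr (div_pos (by linarith) (by linarith)))

lemma Kfun_sq {γ : ℝ} (hγ : 1 < γ) : Kfun γ ^ 2 = (γ - 2) ^ 2 * ((γ + 1) / (γ - 1)) := by
  rw [Kfun, mul_pow, Real.sq_sqrt (div_pos (by linarith) (by linarith)).le]

lemma sub_two_le_Kfun {γ : ℝ} (hγ : 2 ≤ γ) : γ - 2 ≤ Kfun γ := by
  have : 1 ≤ Real.sqrt ((γ + 1) / (γ - 1)) := by
    rw [Real.one_le_sqrt, le_div_iff₀ (by linarith)]
    linarith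
  rw [Kfun]
  nlinarith

lemma Kfun_continuousOn : ContinuousOn Kfun {1}ᶜ :=
  (continuous_sub_right 2).continuousOn.mul <| Real.continuous_sqrt.comp_continuousOn <|
    (continuous_add_const 1).continuousOn.div (continuous_sub_right 1).continuousOn
      fun _ hx => sub_ne_zero.mpr hx

lemma Kfun_strictMonoOn : StrictMonoOn Kfun (Set.Ioi 2) := by
  intro a (ha : 2 < a) b (hb : 2 < b) hab
  refine lt_of_pow_lt_pow_left₀ 2 (Kfun_pos hb).le ?_
  rw [Kfun_sq (by linarith), Kfun_sq (by linarith), ← mul_div_assoc, ← mul_div_assoc,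
    div_lt_div_iff₀ (by linarith) (by linarith)]
  nlinarith [mul_pos (mul_pos (sub_pos.mpr ha) (sub_pos.mpr hb)) (sub_pos.mpr hab),
    mul_pos (mul_pos (mul_pos (sub_pos.mpr ha) (sub_pos.mpr hb)) (sub_pos.mpr hb))
      (sub_pos.mpr hab)]

lemma Kfun_image_Ioi : Kfun '' Set.Ioi 2 = Set.Ioi 0 := by
  refine Set.Subset.antisymm (Set.image_subset_iff.mpr fun γ hγ => Kfun_pos hγ) fun K hK => ?_
  have hK : (0 : ℝ) < K := hK
  have hcont : ContinuousOn Kfun (Set.Icc 2 (K + 3)) :=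
    Kfun_continuousOn.mono fun x hx => Set.mem_compl_singleton_iff.mpr (by linarith [hx.1])
  have hK3 : K < Kfun (K + 3) := by linarith [sub_two_le_Kfun (by linarith : (2 : ℝ) ≤ K + 3)]
  obtain ⟨γ, hγ, rfl⟩ :=
    intermediate_value_Ioo (by linarith) hcont (by simpa [Kfun] using And.intro hK hK3)
  exact ⟨γ, hγ.1, rfl⟩

lemma existsUnique_Kfun_eq {K : ℝ} (hK : 0 < K) :
    ∃! γ : ℝ, γ ∈ Set.Ioi (2 : ℝ) ∧ Kfun γ = K := by
  obtain ⟨γ, hγ, hγK⟩ : K ∈ Kfun '' Set.Ioi 2 := Kfun_image_Ioi ▸ hK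
  exact ⟨γ, ⟨hγ, hγK⟩, fun _ h => Kfun_strictMonoOn.injOn h.1 hγ (h.2.trans hγK.symm)⟩

end Kfun

lemma dseq_sub_xseq_le {γ : ℝ} (hγ : 2 < γ) (n : ℕ) :
    (dseq γ n : ℝ) - xseq γ n - 3 ≤ Kfun γ * Real.sqrt (tseq γ n) := by
  set a := γ ^ n
  have ha : 1 ≤ a := one_le_pow₀ (by linarith)
  have hγ1 : 0 < γ - 1 := by linarith
  have hx : (a - 1) / (γ - 1) ≤ xseq γ n := by
    rw [← geom_sum_eq (by linarith)]; exact geom_sum_le_xseq γ n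
  have ht : (a ^ 2 - 1) / (γ ^ 2 - 1) ≤ tseq γ n := by
    rw [← pow_mul, mul_comm, pow_mul, ← geom_sum_eq (by nlinarith)]
    exact geom_sum_sq_le_tseq (by linarith) n
  have hL : (dseq γ n : ℝ) - xseq γ n - 3 ≤ (γ - 2) * (a - 1) / (γ - 1) := by
    have : (γ - 2) * (a - 1) / (γ - 1) = (a - 1) - (a - 1) / (γ - 1) := by field_simp; ring
    linarith [dseq_le_pow_add_two γ n]
  -- `a² − 1 ≥ (a − 1)²` together with `(γ + 1)/(γ − 1) / (γ² − 1) = 1/(γ − 1)²`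
  have hsq : ((γ - 2) * (a - 1) / (γ - 1)) ^ 2 ≤ Kfun γ ^ 2 * tseq γ n := by
    rw [Kfun_sq (by linarith)]
    calc ((γ - 2) * (a - 1) / (γ - 1)) ^ 2
        ≤ (γ - 2) ^ 2 * ((γ + 1) / (γ - 1)) * ((a ^ 2 - 1) / (γ ^ 2 - 1)) := by
          rw [div_pow, div_le_iff₀ (by positivity)]
          have : (γ + 1) / (γ - 1) * ((a ^ 2 - 1) / (γ ^ 2 - 1)) * (γ - 1) ^ 2 = a ^ 2 - 1 := by
            rw [show γ ^ 2 - 1 = (γ + 1) * (γ - 1) by ring]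
            field_simp
          nlinarith [sq_nonneg (γ - 2)]
      _ ≤ _ := by gcongr
  calc (dseq γ n : ℝ) - xseq γ n - 3 ≤ (γ - 2) * (a - 1) / (γ - 1) := hL
    _ ≤ Real.sqrt (Kfun γ ^ 2 * tseq γ n) := Real.le_sqrt_of_sq_le hsq
    _ = Kfun γ * Real.sqrt (tseq γ n) := by
      rw [Real.sqrt_mul (sq_nonneg _), Real.sqrt_sq (Kfun_pos hγ).le]

lemma neg_three_sub_Kfun_mul_sqrt_le_boundary {γ : ℝ} (hγ : 2 < γ) {t : ℝ} (ht : 0 ≤ t) :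
    -3 - Kfun γ * Real.sqrt t ≤ boundary γ t := by
  have hn := tseq_sSup_le (γ := γ) (by linarith) ht
  have := dseq_sub_xseq_le hγ (sSup {n : ℕ | (tseq γ n : ℝ) ≤ t})
  have := mul_le_mul_of_nonneg_left (Real.sqrt_le_sqrt hn) (Kfun_pos hγ).le
  rw [boundary]
  linarith

/-- **The boundary lemma.** `γ ↦ (γ−2)√((γ+1)/(γ−1))` is a continuous strictly
increasing map from `(2,∞)` onto `(0,∞)` (so `γ(K)` is well defined for all `K > 0`),
and if `γ ∈ (2,∞)` solves `(γ−2)√((γ+1)/(γ−1)) = K` then the step function `∂^γ`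
satisfies `∂^γ(t) ≥ −3 − K√t` for all `t ≥ 0`. -/
theorem exceptional_times_thm10 :
    (ContinuousOn Kfun (Set.Ioi 2) ∧ StrictMonoOn Kfun (Set.Ioi 2) ∧
      Kfun '' Set.Ioi 2 = Set.Ioi 0) ∧
    (∀ K : ℝ, 0 < K → ∃! γ : ℝ, γ ∈ Set.Ioi (2 : ℝ) ∧ Kfun γ = K) ∧
    (∀ K γ : ℝ, 0 < K → 2 < γ → Kfun γ = K →
      ∀ t : ℝ, 0 ≤ t → boundary γ t ≥ -3 - K * Real.sqrt t) := by
  refine ⟨⟨Kfun_continuousOn.mono fun x (hx : 2 < x) => ?_, Kfun_strictMonoOn, Kfun_image_Ioi⟩,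
    fun K hK => existsUnique_Kfun_eq hK, ?_⟩
  · exact Set.mem_compl_singleton_iff.mpr (by linarith)
  · rintro K γ - hγ rfl t ht
    exact neg_three_sub_Kfun_mul_sqrt_le_boundary hγ ht

end DyDWPaper
end
end
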